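/- arXiv:2001.08054 — 4 statements merged into one kernel-verified Lean document; each statement's English description precedes it below -/
import Mathlib

section
/- For every 3-periodic billiard orbit P₁P₂P₃ in the ellipse E and every ordered pair of distinct indices i, j, the Joachimsthal quantity |⟪(Pⱼ − Pᵢ)/‖Pⱼ − Pᵢ‖, (xᵢ/a², yᵢ/b²)⟫| is the same at all vertices and equals γ = √(2δ − a² − b²)/c², where Pᵢ = (xᵢ, yᵢ). -/
noncomputable section

open EuclideanGeometry Real

/-- Points of the plane. -/
abbrev Pt := EuclideanSpace ℝ (Fin 2)

/-- Membership in the billiard ellipse `x²/a² + y²/b² = 1`. -/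
def onEllipse (a b : ℝ) (P : Pt) : Prop :=
  (P 0) ^ 2 / a ^ 2 + (P 1) ^ 2 / b ^ 2 = 1

/-- Billiard reflection law at vertex `P` (other vertices `Q`, `R`): the sum of the two
unit vectors from `P` towards `Q` and `R` is orthogonal to the tangent direction
`(-P.y/b², P.x/a²)` of the ellipse at `P`. -/
def reflects (a b : ℝ) (P Q R : Pt) : Prop :=
  (‖Q - P‖⁻¹ • (Q - P) + ‖R - P‖⁻¹ • (R - P)) 0 * (-(P 1) / b ^ 2) +
  (‖Q - P‖⁻¹ • (Q - P) + ‖R - P‖⁻¹ • (R - P)) 1 * ((P 0) / a ^ 2) = 0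

/-- `P₁P₂P₃` is a 3-periodic billiard orbit in the ellipse with semiaxes `a`, `b`:
pairwise distinct points on the ellipse satisfying the reflection law at every vertex. -/
def IsOrbit (a b : ℝ) (P₁ P₂ P₃ : Pt) : Prop :=
  P₁ ≠ P₂ ∧ P₂ ≠ P₃ ∧ P₁ ≠ P₃ ∧
  onEllipse a b P₁ ∧ onEllipse a b P₂ ∧ onEllipse a b P₃ ∧
  reflects a b P₁ P₂ P₃ ∧ reflects a b P₂ P₃ P₁ ∧ reflects a b P₃ P₁ P₂

/-- key cubic lemma over ℂ -/
lemma cubic_lemma (β k y₁ y₂ y₃ : ℂ)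
    (h12 : y₁^2 + y₂^2 - β*(y₁^2*y₂^2+1) = 2*k*(y₁*y₂))
    (h13 : y₁^2 + y₃^2 - β*(y₁^2*y₃^2+1) = 2*k*(y₁*y₃))
    (h23 : y₂^2 + y₃^2 - β*(y₂^2*y₃^2+1) = 2*k*(y₂*y₃))
    (n12 : y₁ ≠ y₂) (n13 : y₁ ≠ y₃) (n23 : y₂ ≠ y₃) :
    (1 + β*(y₁*y₂+y₁*y₃+y₂*y₃) + 2*k = 0) ∧ ((y₁+y₂+y₃) + β*(y₁*y₂*y₃) = 0) := by
  have G1 : (y₂+y₃)*(1-β*y₁^2) - 2*k*y₁ = 0 := by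
    have h : (y₂-y₃) * ((y₂+y₃)*(1-β*y₁^2) - 2*k*y₁) = 0 := by linear_combination h12 - h13
    exact (mul_eq_zero.mp h).resolve_left (sub_ne_zero.mpr n23)
  have G2 : (y₁+y₃)*(1-β*y₂^2) - 2*k*y₂ = 0 := by
    have h : (y₁-y₃) * ((y₁+y₃)*(1-β*y₂^2) - 2*k*y₂) = 0 := by linear_combination h12 - h23
    exact (mul_eq_zero.mp h).resolve_left (sub_ne_zero.mpr n13)
  have G3 : (y₁+y₂)*(1-β*y₃^2) - 2*k*y₃ = 0 := by
    have h : (y₁-y₂) * ((y₁+y₂)*(1-β*y₃^2) - 2*k*y₃) = 0 := by linear_combination h13 - h23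
    exact (mul_eq_zero.mp h).resolve_left (sub_ne_zero.mpr n12)
  have E : 1 + β*(y₁*y₂+y₁*y₃+y₂*y₃) + 2*k = 0 := by
    have h : (y₃-y₂) * (1 + β*(y₁*y₂+y₁*y₃+y₂*y₃) + 2*k) = 0 := by
      linear_combination G2 - G3
    exact (mul_eq_zero.mp h).resolve_left (sub_ne_zero.mpr (Ne.symm n23))
  exact ⟨E, by linear_combination G1 + y₁ * E⟩

/-- reflection: equal squares imply equal (negative) normal components -/
lemma refl_eq {n0 n1 q0 q1 r0 r1 : ℝ} (hq : q0^2+q1^2 = 1) (hr : r0^2+r1^2 = 1)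
    (hcross : (q0*n1 - q1*n0) + (r0*n1 - r1*n0) = 0)
    (hqneg : q0*n0+q1*n1 < 0) (hrneg : r0*n0+r1*n1 < 0) :
    q0*n0+q1*n1 = r0*n0+r1*n1 := by
  have lq : (q0*n0+q1*n1)^2 + (q0*n1-q1*n0)^2 = n0^2+n1^2 := by
    linear_combination (n0^2+n1^2)*hq
  have lr' : (r0*n0+r1*n1)^2 + (r0*n1-r1*n0)^2 = n0^2+n1^2 := by
    linear_combination (n0^2+n1^2)*hr
  have hfac : ((q0*n0+q1*n1) - (r0*n0+r1*n1)) * ((q0*n0+q1*n1) + (r0*n0+r1*n1)) = 0 := by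
    linear_combination lq - lr' + ((r0*n1-r1*n0) - (q0*n1-q1*n0))*hcross
  rcases mul_eq_zero.mp hfac with h | h
  · linarith
  · linarith

lemma unit_of (L dx dy : ℝ) (hL : 0 < L) (h : L^2 = dx^2+dy^2) :
    (L⁻¹*dx)^2 + (L⁻¹*dy)^2 = 1 := by
  have hL' : L ≠ 0 := ne_of_gt hL
  field_simp
  linear_combination -h

lemma norm_sub_sq' (P Q : Pt) : ‖Q - P‖^2 = (Q 0 - P 0)^2 + (Q 1 - P 1)^2 := by
  have h : ‖Q - P‖ = Real.sqrt ((Q 0 - P 0)^2 + (Q 1 - P 1)^2) := by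
    rw [EuclideanSpace.norm_eq, Fin.sum_univ_two]
    simp [sq_abs]
  rw [h, Real.sq_sqrt (by positivity)]

/-- side equation in u,v-variables -/
lemma pair_eq (a b γ L u1 v1 u2 v2 : ℝ) (hγ : 0 < γ) (hL : 0 < L)
    (hA : γ * L = 1 - (u1*u2 + v1*v2))
    (hB : L^2 = (a*(u2-u1))^2 + (b*(v2-v1))^2)
    (hc1 : u1^2+v1^2 = 1) (hc2 : u2^2+v2^2 = 1) :
    (1 - γ^2*(a^2-b^2))*(u1*u2) + (1 + γ^2*(a^2-b^2))*(v1*v2)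
      = 1 - γ^2*(a^2+b^2) := by
  have hid : (a*(u2-u1))^2 + (b*(v2-v1))^2
      = (1-(u1*u2+v1*v2))*((a^2+b^2) - (a^2-b^2)*(u1*u2-v1*v2)) := by
    linear_combination (a^2*(1-u2^2)+b^2*(1-v2^2)+(a^2+b^2)*(u2^2+v2^2-1))*hc1
      + (a^2*(1-u1^2)+b^2*(1-v1^2))*hc2
  have hpos : 0 < 1 - (u1*u2+v1*v2) := by
    rw [← hA]; positivity
  have hQ : (1-(u1*u2+v1*v2)) * (1-(u1*u2+v1*v2))
      = (1-(u1*u2+v1*v2)) * (γ^2*((a^2+b^2) - (a^2-b^2)*(u1*u2-v1*v2))) := by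
    have h1 : (1-(u1*u2+v1*v2))^2 = γ^2*L^2 := by rw [← hA]; ring
    rw [hB, hid] at h1
    linear_combination h1
  have hc := mul_left_cancel₀ (ne_of_gt hpos) hQ
  linear_combination -hc

lemma cne (r s r' s' : ℝ) (h : ¬(r = r' ∧ s = s')) :
    (r:ℂ) + Complex.I*s ≠ (r':ℂ) + Complex.I*s' := by
  intro hEq
  apply h
  have hre := congrArg Complex.re hEq
  have him := congrArg Complex.im hEq
  simp at hre him
  exact ⟨hre, him⟩

set_option maxHeartbeats 1000000 in
/-- Joachimsthal invariant: for every ordered pair of distinct vertices, the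
absolute inner product of the unit side direction with the vector with
coordinates x/a^2, y/b^2 at the departing vertex is the same and equals
the constant gamma. -/
theorem joachimsthal_invariant (a b : ℝ) (hb : 0 < b) (hab : b < a)
    (P₁ P₂ P₃ : Pt) (h : IsOrbit a b P₁ P₂ P₃) :
    ∀ i j : Fin 3, i ≠ j →
      |((‖(![P₁, P₂, P₃] j) - (![P₁, P₂, P₃] i)‖⁻¹ •
          ((![P₁, P₂, P₃] j) - (![P₁, P₂, P₃] i))) 0) * ((![P₁, P₂, P₃] i) 0 / a ^ 2) +
       ((‖(![P₁, P₂, P₃] j) - (![P₁, P₂, P₃] i)‖⁻¹ •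
          ((![P₁, P₂, P₃] j) - (![P₁, P₂, P₃] i))) 1) * ((![P₁, P₂, P₃] i) 1 / b ^ 2)| =
      Real.sqrt (2 * Real.sqrt (a ^ 4 - a ^ 2 * b ^ 2 + b ^ 4) - a ^ 2 - b ^ 2) /
        (a ^ 2 - b ^ 2) := by
  obtain ⟨hne12, hne23, hne13, e1, e2, e3, r1, r2, r3⟩ := h
  have ha : (0:ℝ) < a := hb.trans hab
  have ha' : a ≠ 0 := ne_of_gt ha
  have hb' : b ≠ 0 := ne_of_gt hb
  simp only [onEllipse] at e1 e2 e3
  simp only [reflects, PiLp.add_apply, PiLp.smul_apply, PiLp.sub_apply, smul_eq_mul] at r1 r2 r3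
  set x1 := P₁ 0 with hx1
  set y1 := P₁ 1 with hy1
  set x2 := P₂ 0 with hx2
  set y2 := P₂ 1 with hy2
  set x3 := P₃ 0 with hx3
  set y3 := P₃ 1 with hy3
  -- distinctness in coordinates
  have hcne12 : ¬(x1 = x2 ∧ y1 = y2) := by
    rintro ⟨h1, h2⟩
    exact hne12 (by ext i; fin_cases i <;> assumption)
  have hcne23 : ¬(x2 = x3 ∧ y2 = y3) := by
    rintro ⟨h1, h2⟩
    exact hne23 (by ext i; fin_cases i <;> assumption)
  have hcne13 : ¬(x1 = x3 ∧ y1 = y3) := by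
    rintro ⟨h1, h2⟩
    exact hne13 (by ext i; fin_cases i <;> assumption)
  -- norms
  have hL12 : (0:ℝ) < ‖P₂ - P₁‖ := by
    rw [norm_pos_iff]; exact sub_ne_zero.mpr (Ne.symm hne12)
  have hL13 : (0:ℝ) < ‖P₃ - P₁‖ := by
    rw [norm_pos_iff]; exact sub_ne_zero.mpr (Ne.symm hne13)
  have hL23 : (0:ℝ) < ‖P₃ - P₂‖ := by
    rw [norm_pos_iff]; exact sub_ne_zero.mpr (Ne.symm hne23)
  have hS12 : ‖P₂ - P₁‖^2 = (x2-x1)^2 + (y2-y1)^2 := norm_sub_sq' P₁ P₂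
  have hS13 : ‖P₃ - P₁‖^2 = (x3-x1)^2 + (y3-y1)^2 := norm_sub_sq' P₁ P₃
  have hS23 : ‖P₃ - P₂‖^2 = (x3-x2)^2 + (y3-y2)^2 := norm_sub_sq' P₂ P₃
  have hrev12 : ‖P₁ - P₂‖ = ‖P₂ - P₁‖ := norm_sub_rev _ _
  have hrev13 : ‖P₁ - P₃‖ = ‖P₃ - P₁‖ := norm_sub_rev _ _
  have hrev23 : ‖P₂ - P₃‖ = ‖P₃ - P₂‖ := norm_sub_rev _ _
  rw [hrev12] at r2
  rw [hrev13, hrev23] at r3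
  -- D negativity helper
  have hDneg : ∀ u1' v1' u2' v2' : ℝ, u1'^2/a^2 + v1'^2/b^2 = 1 →
      u2'^2/a^2 + v2'^2/b^2 = 1 → ¬(u1' = u2' ∧ v1' = v2') →
      (u2'-u1')*u1'/a^2 + (v2'-v1')*v1'/b^2 < 0 := by
    intro u1' v1' u2' v2' he1 he2 hne
    have hsym : (u2'-u1')*u1'/a^2 + (v2'-v1')*v1'/b^2
        = (u1'-u2')*u2'/a^2 + (v1'-v2')*v2'/b^2 := by
      linear_combination he2 - he1
    have h2 : 2*((u2'-u1')*u1'/a^2 + (v2'-v1')*v1'/b^2)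
        = -((u2'-u1')^2/a^2 + (v2'-v1')^2/b^2) := by
      linear_combination hsym
    have hne' : u1' ≠ u2' ∨ v1' ≠ v2' := by tauto
    have hpos : 0 < (u2'-u1')^2/a^2 + (v2'-v1')^2/b^2 := by
      rcases hne' with h' | h'
      · have h3 : u2' - u1' ≠ 0 := sub_ne_zero.mpr (Ne.symm h')
        have h4 : 0 < (u2'-u1')^2/a^2 := by positivity
        have h5 : 0 ≤ (v2'-v1')^2/b^2 := by positivity
        linarith
      · have h3 : v2' - v1' ≠ 0 := sub_ne_zero.mpr (Ne.symm h')
        have h4 : 0 < (v2'-v1')^2/b^2 := by positivity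
        have h5 : 0 ≤ (u2'-u1')^2/a^2 := by positivity
        linarith
    linarith
  have hD12neg : (x2-x1)*x1/a^2 + (y2-y1)*y1/b^2 < 0 := hDneg _ _ _ _ e1 e2 hcne12
  have hD21neg : (x1-x2)*x2/a^2 + (y1-y2)*y2/b^2 < 0 := hDneg _ _ _ _ e2 e1 (by tauto)
  have hD13neg : (x3-x1)*x1/a^2 + (y3-y1)*y1/b^2 < 0 := hDneg _ _ _ _ e1 e3 hcne13
  have hD31neg : (x1-x3)*x3/a^2 + (y1-y3)*y3/b^2 < 0 := hDneg _ _ _ _ e3 e1 (by tauto)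
  have hD23neg : (x3-x2)*x2/a^2 + (y3-y2)*y2/b^2 < 0 := hDneg _ _ _ _ e2 e3 hcne23
  have hD32neg : (x2-x3)*x3/a^2 + (y2-y3)*y3/b^2 < 0 := hDneg _ _ _ _ e3 e2 (by tauto)
  -- j values in "refl_eq" shape, negativity
  have jneg : ∀ (L dx dy n0 n1 : ℝ), 0 < L → dx*n0 + dy*n1 < 0 →
      L⁻¹*dx*n0 + L⁻¹*dy*n1 < 0 := by
    intro L dx dy n0 n1 hL hD
    have heq : L⁻¹*dx*n0 + L⁻¹*dy*n1 = L⁻¹ * (dx*n0 + dy*n1) := by ring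
    rw [heq]
    exact mul_neg_of_pos_of_neg (inv_pos.mpr hL) hD
  have hD12neg' : (x2-x1)*(x1/a^2) + (y2-y1)*(y1/b^2) < 0 := by
    have : (x2-x1)*(x1/a^2) + (y2-y1)*(y1/b^2)
        = (x2-x1)*x1/a^2 + (y2-y1)*y1/b^2 := by ring
    rw [this]; exact hD12neg
  have hD13neg' : (x3-x1)*(x1/a^2) + (y3-y1)*(y1/b^2) < 0 := by
    have : (x3-x1)*(x1/a^2) + (y3-y1)*(y1/b^2)
        = (x3-x1)*x1/a^2 + (y3-y1)*y1/b^2 := by ring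
    rw [this]; exact hD13neg
  have hD21neg' : (x1-x2)*(x2/a^2) + (y1-y2)*(y2/b^2) < 0 := by
    have : (x1-x2)*(x2/a^2) + (y1-y2)*(y2/b^2)
        = (x1-x2)*x2/a^2 + (y1-y2)*y2/b^2 := by ring
    rw [this]; exact hD21neg
  have hD23neg' : (x3-x2)*(x2/a^2) + (y3-y2)*(y2/b^2) < 0 := by
    have : (x3-x2)*(x2/a^2) + (y3-y2)*(y2/b^2)
        = (x3-x2)*x2/a^2 + (y3-y2)*y2/b^2 := by ring
    rw [this]; exact hD23neg
  have hD31neg' : (x1-x3)*(x3/a^2) + (y1-y3)*(y3/b^2) < 0 := by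
    have : (x1-x3)*(x3/a^2) + (y1-y3)*(y3/b^2)
        = (x1-x3)*x3/a^2 + (y1-y3)*y3/b^2 := by ring
    rw [this]; exact hD31neg
  have hD32neg' : (x2-x3)*(x3/a^2) + (y2-y3)*(y3/b^2) < 0 := by
    have : (x2-x3)*(x3/a^2) + (y2-y3)*(y3/b^2)
        = (x2-x3)*x3/a^2 + (y2-y3)*y3/b^2 := by ring
    rw [this]; exact hD32neg
  have hj12neg := jneg ‖P₂ - P₁‖ (x2-x1) (y2-y1) (x1/a^2) (y1/b^2) hL12 hD12neg'
  have hj13neg := jneg ‖P₃ - P₁‖ (x3-x1) (y3-y1) (x1/a^2) (y1/b^2) hL13 hD13neg'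
  have hj21neg := jneg ‖P₂ - P₁‖ (x1-x2) (y1-y2) (x2/a^2) (y2/b^2) hL12 hD21neg'
  have hj23neg := jneg ‖P₃ - P₂‖ (x3-x2) (y3-y2) (x2/a^2) (y2/b^2) hL23 hD23neg'
  have hj31neg := jneg ‖P₃ - P₁‖ (x1-x3) (y1-y3) (x3/a^2) (y3/b^2) hL13 hD31neg'
  have hj32neg := jneg ‖P₃ - P₂‖ (x2-x3) (y2-y3) (x3/a^2) (y3/b^2) hL23 hD32neg'
  -- unit vectors
  have hu12 : (‖P₂ - P₁‖⁻¹*(x2-x1))^2 + (‖P₂ - P₁‖⁻¹*(y2-y1))^2 = 1 :=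
    unit_of _ _ _ hL12 hS12
  have hu13 : (‖P₃ - P₁‖⁻¹*(x3-x1))^2 + (‖P₃ - P₁‖⁻¹*(y3-y1))^2 = 1 :=
    unit_of _ _ _ hL13 hS13
  have hu23 : (‖P₃ - P₂‖⁻¹*(x3-x2))^2 + (‖P₃ - P₂‖⁻¹*(y3-y2))^2 = 1 :=
    unit_of _ _ _ hL23 hS23
  have hu21 : (‖P₂ - P₁‖⁻¹*(x1-x2))^2 + (‖P₂ - P₁‖⁻¹*(y1-y2))^2 = 1 :=
    unit_of ‖P₂ - P₁‖ (x1-x2) (y1-y2) hL12 (by rw [hS12]; ring)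
  have hu31 : (‖P₃ - P₁‖⁻¹*(x1-x3))^2 + (‖P₃ - P₁‖⁻¹*(y1-y3))^2 = 1 :=
    unit_of ‖P₃ - P₁‖ (x1-x3) (y1-y3) hL13 (by rw [hS13]; ring)
  have hu32 : (‖P₃ - P₂‖⁻¹*(x2-x3))^2 + (‖P₃ - P₂‖⁻¹*(y2-y3))^2 = 1 :=
    unit_of ‖P₃ - P₂‖ (x2-x3) (y2-y3) hL23 (by rw [hS23]; ring)
  -- reflections: equality of j values at each vertex
  have hrefl1 : ‖P₂ - P₁‖⁻¹*(x2-x1) * (x1/a^2) + ‖P₂ - P₁‖⁻¹*(y2-y1) * (y1/b^2)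
      = ‖P₃ - P₁‖⁻¹*(x3-x1) * (x1/a^2) + ‖P₃ - P₁‖⁻¹*(y3-y1) * (y1/b^2) :=
    refl_eq hu12 hu13 (by linear_combination -r1) hj12neg hj13neg
  have hrefl2 : ‖P₃ - P₂‖⁻¹*(x3-x2) * (x2/a^2) + ‖P₃ - P₂‖⁻¹*(y3-y2) * (y2/b^2)
      = ‖P₂ - P₁‖⁻¹*(x1-x2) * (x2/a^2) + ‖P₂ - P₁‖⁻¹*(y1-y2) * (y2/b^2) :=
    refl_eq hu23 hu21 (by linear_combination -r2) hj23neg hj21neg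
  have hrefl3 : ‖P₃ - P₁‖⁻¹*(x1-x3) * (x3/a^2) + ‖P₃ - P₁‖⁻¹*(y1-y3) * (y3/b^2)
      = ‖P₃ - P₂‖⁻¹*(x2-x3) * (x3/a^2) + ‖P₃ - P₂‖⁻¹*(y2-y3) * (y3/b^2) :=
    refl_eq hu31 hu32 (by linear_combination -r3) hj31neg hj32neg
  -- symmetry of j values along a chord
  have hLinv12 : ‖P₂ - P₁‖⁻¹ * ‖P₂ - P₁‖ = 1 := inv_mul_cancel₀ (ne_of_gt hL12)
  have hLinv13 : ‖P₃ - P₁‖⁻¹ * ‖P₃ - P₁‖ = 1 := inv_mul_cancel₀ (ne_of_gt hL13)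
  have hLinv23 : ‖P₃ - P₂‖⁻¹ * ‖P₃ - P₂‖ = 1 := inv_mul_cancel₀ (ne_of_gt hL23)
  have hsym12 : ‖P₂ - P₁‖⁻¹*(x2-x1) * (x1/a^2) + ‖P₂ - P₁‖⁻¹*(y2-y1) * (y1/b^2)
      = ‖P₂ - P₁‖⁻¹*(x1-x2) * (x2/a^2) + ‖P₂ - P₁‖⁻¹*(y1-y2) * (y2/b^2) := by
    have hD : (x2-x1)*(x1/a^2) + (y2-y1)*(y1/b^2)
        = (x1-x2)*(x2/a^2) + (y1-y2)*(y2/b^2) := by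
      linear_combination e2 - e1
    linear_combination ‖P₂ - P₁‖⁻¹ * hD
  have hsym13 : ‖P₃ - P₁‖⁻¹*(x3-x1) * (x1/a^2) + ‖P₃ - P₁‖⁻¹*(y3-y1) * (y1/b^2)
      = ‖P₃ - P₁‖⁻¹*(x1-x3) * (x3/a^2) + ‖P₃ - P₁‖⁻¹*(y1-y3) * (y3/b^2) := by
    have hD : (x3-x1)*(x1/a^2) + (y3-y1)*(y1/b^2)
        = (x1-x3)*(x3/a^2) + (y1-y3)*(y3/b^2) := by
      linear_combination e3 - e1
    linear_combination ‖P₃ - P₁‖⁻¹ * hD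
  have hsym23 : ‖P₃ - P₂‖⁻¹*(x3-x2) * (x2/a^2) + ‖P₃ - P₂‖⁻¹*(y3-y2) * (y2/b^2)
      = ‖P₃ - P₂‖⁻¹*(x2-x3) * (x3/a^2) + ‖P₃ - P₂‖⁻¹*(y2-y3) * (y3/b^2) := by
    have hD : (x3-x2)*(x2/a^2) + (y3-y2)*(y2/b^2)
        = (x2-x3)*(x3/a^2) + (y2-y3)*(y3/b^2) := by
      linear_combination e3 - e2
    linear_combination ‖P₃ - P₂‖⁻¹ * hD
  -- the common value
  obtain ⟨γ, hγdef⟩ : ∃ g : ℝ, g = -(‖P₂ - P₁‖⁻¹*(x2-x1) * (x1/a^2) + ‖P₂ - P₁‖⁻¹*(y2-y1) * (y1/b^2)) := ⟨_, rfl⟩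
  have hγpos : 0 < γ := by rw [hγdef]; linarith [hj12neg]
  have hv12 : ‖P₂ - P₁‖⁻¹*(x2-x1) * (x1/a^2) + ‖P₂ - P₁‖⁻¹*(y2-y1) * (y1/b^2) = -γ := by
    rw [hγdef]; ring
  have hv13 : ‖P₃ - P₁‖⁻¹*(x3-x1) * (x1/a^2) + ‖P₃ - P₁‖⁻¹*(y3-y1) * (y1/b^2) = -γ := by
    rw [← hrefl1]; exact hv12
  have hv21 : ‖P₂ - P₁‖⁻¹*(x1-x2) * (x2/a^2) + ‖P₂ - P₁‖⁻¹*(y1-y2) * (y2/b^2) = -γ := by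
    rw [← hsym12]; exact hv12
  have hv23 : ‖P₃ - P₂‖⁻¹*(x3-x2) * (x2/a^2) + ‖P₃ - P₂‖⁻¹*(y3-y2) * (y2/b^2) = -γ := by
    rw [hrefl2]; exact hv21
  have hv32 : ‖P₃ - P₂‖⁻¹*(x2-x3) * (x3/a^2) + ‖P₃ - P₂‖⁻¹*(y2-y3) * (y3/b^2) = -γ := by
    rw [← hsym23]; exact hv23
  have hv31 : ‖P₃ - P₁‖⁻¹*(x1-x3) * (x3/a^2) + ‖P₃ - P₁‖⁻¹*(y1-y3) * (y3/b^2) = -γ := by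
    rw [hrefl3]; exact hv32
  -- Side equations γ L = 1 - (u·u' + v·v')
  have hA12 : γ * ‖P₂ - P₁‖ = 1 - ((x1/a)*(x2/a) + (y1/b)*(y2/b)) := by
    linear_combination ‖P₂ - P₁‖*hv12 - ((x2-x1)*(x1/a^2)+(y2-y1)*(y1/b^2))*hLinv12 + e1
  have hA13 : γ * ‖P₃ - P₁‖ = 1 - ((x1/a)*(x3/a) + (y1/b)*(y3/b)) := by
    linear_combination ‖P₃ - P₁‖*hv13 - ((x3-x1)*(x1/a^2)+(y3-y1)*(y1/b^2))*hLinv13 + e1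
  have hA23 : γ * ‖P₃ - P₂‖ = 1 - ((x2/a)*(x3/a) + (y2/b)*(y3/b)) := by
    linear_combination ‖P₃ - P₂‖*hv23 - ((x3-x2)*(x2/a^2)+(y3-y2)*(y2/b^2))*hLinv23 + e2
  -- squared-length equations in u,v variables
  have hax1 : a*(x2/a - x1/a) = x2 - x1 := by field_simp
  have hax2 : a*(x3/a - x1/a) = x3 - x1 := by field_simp
  have hax3 : a*(x3/a - x2/a) = x3 - x2 := by field_simp
  have hby1 : b*(y2/b - y1/b) = y2 - y1 := by field_simp
  have hby2 : b*(y3/b - y1/b) = y3 - y1 := by field_simp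
  have hby3 : b*(y3/b - y2/b) = y3 - y2 := by field_simp
  have hB12 : ‖P₂ - P₁‖^2 = (a*((x2/a)-(x1/a)))^2 + (b*((y2/b)-(y1/b)))^2 := by
    rw [hax1, hby1]; exact hS12
  have hB13 : ‖P₃ - P₁‖^2 = (a*((x3/a)-(x1/a)))^2 + (b*((y3/b)-(y1/b)))^2 := by
    rw [hax2, hby2]; exact hS13
  have hB23 : ‖P₃ - P₂‖^2 = (a*((x3/a)-(x2/a)))^2 + (b*((y3/b)-(y2/b)))^2 := by
    rw [hax3, hby3]; exact hS23
  -- circle equations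
  have hc1 : (x1/a)^2 + (y1/b)^2 = 1 := by
    field_simp
    field_simp at e1
    linear_combination e1
  have hc2 : (x2/a)^2 + (y2/b)^2 = 1 := by
    field_simp
    field_simp at e2
    linear_combination e2
  have hc3 : (x3/a)^2 + (y3/b)^2 = 1 := by
    field_simp
    field_simp at e3
    linear_combination e3
  -- pair equations
  have hp12 := pair_eq a b γ ‖P₂ - P₁‖ (x1/a) (y1/b) (x2/a) (y2/b) hγpos hL12 hA12 hB12 hc1 hc2
  have hp13 := pair_eq a b γ ‖P₃ - P₁‖ (x1/a) (y1/b) (x3/a) (y3/b) hγpos hL13 hA13 hB13 hc1 hc3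
  have hp23 := pair_eq a b γ ‖P₃ - P₂‖ (x2/a) (y2/b) (x3/a) (y3/b) hγpos hL23 hA23 hB23 hc2 hc3
  -- complex variables
  obtain ⟨u1, hu1d⟩ : ∃ t : ℝ, t = x1/a := ⟨_, rfl⟩
  obtain ⟨v1, hv1d⟩ : ∃ t : ℝ, t = y1/b := ⟨_, rfl⟩
  obtain ⟨u2, hu2d⟩ : ∃ t : ℝ, t = x2/a := ⟨_, rfl⟩
  obtain ⟨v2, hv2d⟩ : ∃ t : ℝ, t = y2/b := ⟨_, rfl⟩
  obtain ⟨u3, hu3d⟩ : ∃ t : ℝ, t = x3/a := ⟨_, rfl⟩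
  obtain ⟨v3, hv3d⟩ : ∃ t : ℝ, t = y3/b := ⟨_, rfl⟩
  rw [← hu1d, ← hv1d, ← hu2d, ← hv2d] at hp12
  rw [← hu1d, ← hv1d, ← hu3d, ← hv3d] at hp13
  rw [← hu2d, ← hv2d, ← hu3d, ← hv3d] at hp23
  rw [← hu1d, ← hv1d] at hc1
  rw [← hu2d, ← hv2d] at hc2
  rw [← hu3d, ← hv3d] at hc3
  have huvne12 : ¬(u1 = u2 ∧ v1 = v2) := by
    rintro ⟨h1', h2'⟩
    apply hcne12
    constructor
    · rw [hu1d, hu2d] at h1'; field_simp at h1'; exact h1'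
    · rw [hv1d, hv2d] at h2'; field_simp at h2'; exact h2'
  have huvne13 : ¬(u1 = u3 ∧ v1 = v3) := by
    rintro ⟨h1', h2'⟩
    apply hcne13
    constructor
    · rw [hu1d, hu3d] at h1'; field_simp at h1'; exact h1'
    · rw [hv1d, hv3d] at h2'; field_simp at h2'; exact h2'
  have huvne23 : ¬(u2 = u3 ∧ v2 = v3) := by
    rintro ⟨h1', h2'⟩
    apply hcne23
    constructor
    · rw [hu2d, hu3d] at h1'; field_simp at h1'; exact h1'
    · rw [hv2d, hv3d] at h2'; field_simp at h2'; exact h2'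
  obtain ⟨Y1, hY1⟩ : ∃ t : ℂ, t = (u1:ℂ) + Complex.I*(v1:ℂ) := ⟨_, rfl⟩
  obtain ⟨Y2, hY2⟩ : ∃ t : ℂ, t = (u2:ℂ) + Complex.I*(v2:ℂ) := ⟨_, rfl⟩
  obtain ⟨Y3, hY3⟩ : ∃ t : ℂ, t = (u3:ℂ) + Complex.I*(v3:ℂ) := ⟨_, rfl⟩
  obtain ⟨Z1, hZ1⟩ : ∃ t : ℂ, t = (u1:ℂ) - Complex.I*(v1:ℂ) := ⟨_, rfl⟩
  obtain ⟨Z2, hZ2⟩ : ∃ t : ℂ, t = (u2:ℂ) - Complex.I*(v2:ℂ) := ⟨_, rfl⟩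
  obtain ⟨Z3, hZ3⟩ : ∃ t : ℂ, t = (u3:ℂ) - Complex.I*(v3:ℂ) := ⟨_, rfl⟩
  have hYne12 : Y1 ≠ Y2 := by rw [hY1, hY2]; exact cne _ _ _ _ (by exact_mod_cast huvne12)
  have hYne13 : Y1 ≠ Y3 := by rw [hY1, hY3]; exact cne _ _ _ _ (by exact_mod_cast huvne13)
  have hYne23 : Y2 ≠ Y3 := by rw [hY2, hY3]; exact cne _ _ _ _ (by exact_mod_cast huvne23)
  have hZne12 : Z1 ≠ Z2 := by
    intro hEq
    apply hYne12
    rw [hZ1, hZ2] at hEq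
    have hre := congrArg Complex.re hEq
    have him := congrArg Complex.im hEq
    simp at hre him
    rw [hY1, hY2, hre, him]
  have hZne13 : Z1 ≠ Z3 := by
    intro hEq
    apply hYne13
    rw [hZ1, hZ3] at hEq
    have hre := congrArg Complex.re hEq
    have him := congrArg Complex.im hEq
    simp at hre him
    rw [hY1, hY3, hre, him]
  have hZne23 : Z2 ≠ Z3 := by
    intro hEq
    apply hYne23
    rw [hZ2, hZ3] at hEq
    have hre := congrArg Complex.re hEq
    have him := congrArg Complex.im hEq
    simp at hre him
    rw [hY2, hY3, hre, him]
  -- cast circle and pair equations to ℂ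
  have hcC1 : ((u1:ℂ))^2 + ((v1:ℂ))^2 = 1 := by exact_mod_cast hc1
  have hcC2 : ((u2:ℂ))^2 + ((v2:ℂ))^2 = 1 := by exact_mod_cast hc2
  have hcC3 : ((u3:ℂ))^2 + ((v3:ℂ))^2 = 1 := by exact_mod_cast hc3
  obtain ⟨βR, hβR⟩ : ∃ t : ℝ, t = γ^2*(a^2-b^2) := ⟨_, rfl⟩
  obtain ⟨kR, hkR⟩ : ∃ t : ℝ, t = 1 - γ^2*(a^2+b^2) := ⟨_, rfl⟩
  rw [← hβR, ← hkR] at hp12 hp13 hp23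
  have hpC12 : (1 - (βR:ℂ))*((u1:ℂ)*(u2:ℂ)) + (1 + (βR:ℂ))*((v1:ℂ)*(v2:ℂ)) = (kR:ℂ) := by
    exact_mod_cast hp12
  have hpC13 : (1 - (βR:ℂ))*((u1:ℂ)*(u3:ℂ)) + (1 + (βR:ℂ))*((v1:ℂ)*(v3:ℂ)) = (kR:ℂ) := by
    exact_mod_cast hp13
  have hpC23 : (1 - (βR:ℂ))*((u2:ℂ)*(u3:ℂ)) + (1 + (βR:ℂ))*((v2:ℂ)*(v3:ℂ)) = (kR:ℂ) := by
    exact_mod_cast hp23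
  -- yz = 1
  have hG1 : Y1 * Z1 = 1 := by
    rw [hY1, hZ1]; linear_combination hcC1 - ((v1:ℂ))^2 * Complex.I_sq
  have hG2 : Y2 * Z2 = 1 := by
    rw [hY2, hZ2]; linear_combination hcC2 - ((v2:ℂ))^2 * Complex.I_sq
  have hG3 : Y3 * Z3 = 1 := by
    rw [hY3, hZ3]; linear_combination hcC3 - ((v3:ℂ))^2 * Complex.I_sq
  -- H equations
  have hH12 : Y1*Z2 + Z1*Y2 - (βR:ℂ)*(Y1*Y2 + Z1*Z2) = 2*(kR:ℂ) := by
    rw [hY1, hY2, hZ1, hZ2]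
    linear_combination 2*hpC12 - 2*((v1:ℂ)*(v2:ℂ))*(1+(βR:ℂ))*Complex.I_sq
  have hH13 : Y1*Z3 + Z1*Y3 - (βR:ℂ)*(Y1*Y3 + Z1*Z3) = 2*(kR:ℂ) := by
    rw [hY1, hY3, hZ1, hZ3]
    linear_combination 2*hpC13 - 2*((v1:ℂ)*(v3:ℂ))*(1+(βR:ℂ))*Complex.I_sq
  have hH23 : Y2*Z3 + Z2*Y3 - (βR:ℂ)*(Y2*Y3 + Z2*Z3) = 2*(kR:ℂ) := by
    rw [hY2, hY3, hZ2, hZ3]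
    linear_combination 2*hpC23 - 2*((v2:ℂ)*(v3:ℂ))*(1+(βR:ℂ))*Complex.I_sq
  -- T equations for Y and Z
  have hT12 : Y1^2 + Y2^2 - (βR:ℂ)*(Y1^2*Y2^2+1) = 2*(kR:ℂ)*(Y1*Y2) := by
    linear_combination Y1*Y2*hH12 - Y1^2*hG2 - Y2^2*hG1 + (βR:ℂ)*hG1 + (βR:ℂ)*hG2
      + (βR:ℂ)*(Y1*Z1 - 1)*hG2
  have hT13 : Y1^2 + Y3^2 - (βR:ℂ)*(Y1^2*Y3^2+1) = 2*(kR:ℂ)*(Y1*Y3) := by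
    linear_combination Y1*Y3*hH13 - Y1^2*hG3 - Y3^2*hG1 + (βR:ℂ)*hG1 + (βR:ℂ)*hG3
      + (βR:ℂ)*(Y1*Z1 - 1)*hG3
  have hT23 : Y2^2 + Y3^2 - (βR:ℂ)*(Y2^2*Y3^2+1) = 2*(kR:ℂ)*(Y2*Y3) := by
    linear_combination Y2*Y3*hH23 - Y2^2*hG3 - Y3^2*hG2 + (βR:ℂ)*hG2 + (βR:ℂ)*hG3
      + (βR:ℂ)*(Y2*Z2 - 1)*hG3
  have hTz12 : Z1^2 + Z2^2 - (βR:ℂ)*(Z1^2*Z2^2+1) = 2*(kR:ℂ)*(Z1*Z2) := by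
    linear_combination Z1*Z2*hH12 - Z1^2*hG2 - Z2^2*hG1 + (βR:ℂ)*hG1 + (βR:ℂ)*hG2
      + (βR:ℂ)*(Y1*Z1 - 1)*hG2
  have hTz13 : Z1^2 + Z3^2 - (βR:ℂ)*(Z1^2*Z3^2+1) = 2*(kR:ℂ)*(Z1*Z3) := by
    linear_combination Z1*Z3*hH13 - Z1^2*hG3 - Z3^2*hG1 + (βR:ℂ)*hG1 + (βR:ℂ)*hG3
      + (βR:ℂ)*(Y1*Z1 - 1)*hG3
  have hTz23 : Z2^2 + Z3^2 - (βR:ℂ)*(Z2^2*Z3^2+1) = 2*(kR:ℂ)*(Z2*Z3) := by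
    linear_combination Z2*Z3*hH23 - Z2^2*hG3 - Z3^2*hG2 + (βR:ℂ)*hG2 + (βR:ℂ)*hG3
      + (βR:ℂ)*(Y2*Z2 - 1)*hG3
  obtain ⟨hEy, -⟩ := cubic_lemma (βR:ℂ) (kR:ℂ) Y1 Y2 Y3 hT12 hT13 hT23 hYne12 hYne13 hYne23
  obtain ⟨-, hZsum⟩ := cubic_lemma (βR:ℂ) (kR:ℂ) Z1 Z2 Z3 hTz12 hTz13 hTz23 hZne12 hZne13 hZne23
  -- e₂ = -β
  have he2 : Y1*Y2 + Y1*Y3 + Y2*Y3 + (βR:ℂ) = 0 := by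
    linear_combination (Y1*Y2*Y3)*hZsum - (Y2*Y3 + (βR:ℂ)*(Y2*Z2*(Y3*Z3)))*hG1
      - (Y1*Y3 + (βR:ℂ)*(Y3*Z3))*hG2 - (Y1*Y2 + (βR:ℂ))*hG3
  -- 1 - β² + 2k = 0 over ℂ, then over ℝ
  have hkC : 1 - (βR:ℂ)^2 + 2*(kR:ℂ) = 0 := by
    linear_combination hEy - (βR:ℂ)*he2
  have hkRR : 1 - βR^2 + 2*kR = 0 := by
    have h' : ((1 - βR^2 + 2*kR : ℝ) : ℂ) = 0 := by push_cast; linear_combination hkC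
    exact_mod_cast h'
  -- the quadratic for γ²
  have hKey : (γ^2*(a^2-b^2)*(a^2-b^2) + (a^2+b^2))^2 = 4*(a^4 - a^2*b^2 + b^4) := by
    rw [hβR, hkR] at hkRR
    linear_combination (-(a^2-b^2)^2) * hkRR
  have hc2pos : (0:ℝ) < a^2 - b^2 := by
    have hmul := mul_pos (sub_pos.mpr hab) (show (0:ℝ) < a+b by linarith)
    calc (0:ℝ) < (a-b)*(a+b) := hmul
      _ = a^2 - b^2 := by ring
  have hpos2 : (0:ℝ) < γ^2*(a^2-b^2)*(a^2-b^2) + (a^2+b^2) := by positivity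
  have hsqrt4 : Real.sqrt (4*(a^4 - a^2*b^2 + b^4)) = γ^2*(a^2-b^2)*(a^2-b^2) + (a^2+b^2) := by
    rw [← hKey, Real.sqrt_sq hpos2.le]
  have h4 : Real.sqrt (4*(a^4 - a^2*b^2 + b^4)) = 2*Real.sqrt (a^4 - a^2*b^2 + b^4) := by
    rw [show (4:ℝ)*(a^4 - a^2*b^2 + b^4) = 2^2*(a^4 - a^2*b^2 + b^4) by ring,
      Real.sqrt_mul (by positivity), Real.sqrt_sq (by norm_num)]
  have htop : 2*Real.sqrt (a^4 - a^2*b^2 + b^4) - a^2 - b^2 = (γ*(a^2-b^2))^2 := by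
    have hδval : 2*Real.sqrt (a^4 - a^2*b^2 + b^4) = γ^2*(a^2-b^2)*(a^2-b^2) + (a^2+b^2) := by
      rw [← h4]; exact hsqrt4
    rw [hδval]; ring
  have hfin : Real.sqrt (2*Real.sqrt (a^4 - a^2*b^2 + b^4) - a^2 - b^2) = γ*(a^2-b^2) := by
    rw [htop, Real.sqrt_sq (by positivity)]
  have hγRHS : Real.sqrt (2 * Real.sqrt (a ^ 4 - a ^ 2 * b ^ 2 + b ^ 4) - a ^ 2 - b ^ 2) /
      (a ^ 2 - b ^ 2) = γ := by
    rw [show 2 * Real.sqrt (a ^ 4 - a ^ 2 * b ^ 2 + b ^ 4) - a ^ 2 - b ^ 2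
        = 2*Real.sqrt (a^4 - a^2*b^2 + b^4) - a^2 - b^2 by ring_nf, hfin]
    field_simp
  -- final reduction
  have final : ∀ (P Q : Pt),
      (‖Q - P‖⁻¹*(Q 0 - P 0) * (P 0/a^2) + ‖Q - P‖⁻¹*(Q 1 - P 1) * (P 1/b^2) = -γ) →
      |(‖Q - P‖⁻¹ • (Q - P)) 0 * (P 0 / a ^ 2) +
        (‖Q - P‖⁻¹ • (Q - P)) 1 * (P 1 / b ^ 2)| =
      Real.sqrt (2 * Real.sqrt (a ^ 4 - a ^ 2 * b ^ 2 + b ^ 4) - a ^ 2 - b ^ 2) /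
        (a ^ 2 - b ^ 2) := by
    intro P Q hPQ
    have hx : (‖Q - P‖⁻¹ • (Q - P)) 0 * (P 0 / a ^ 2) +
        (‖Q - P‖⁻¹ • (Q - P)) 1 * (P 1 / b ^ 2) = -γ := by
      simp only [PiLp.smul_apply, PiLp.sub_apply, smul_eq_mul]
      exact hPQ
    rw [hx, abs_neg, abs_of_pos hγpos, hγRHS]
  intro i j hij
  fin_cases i <;> fin_cases j <;>
    simp only [Matrix.cons_val_zero, Matrix.cons_val_one, Matrix.head_cons,
      Matrix.cons_val_two, Matrix.tail_cons, Fin.isValue]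
  · exact absurd rfl hij
  · exact final P₁ P₂ hv12
  · exact final P₁ P₃ hv13
  · exact final P₂ P₁ (by rw [hrev12]; exact hv21)
  · exact absurd rfl hij
  · exact final P₂ P₃ hv23
  · exact final P₃ P₁ (by rw [hrev13]; exact hv31)
  · exact final P₃ P₂ (by rw [hrev23]; exact hv32)
  · exact absurd rfl hij
end
end

section
/- For every 3-periodic billiard orbit P₁P₂P₃ in the ellipse E with P₁ = (x₁, y₁), the cosine of the angle between the side P₁P₂ and the normal to E at P₁ satisfies |⟪(P₂ − P₁)/‖P₂ − P₁‖, n̂₁⟫| = a²b·√(2δ − a² − b²) / (c²·√(a⁴ − c²x₁²)), where n̂₁ is the unit vector in the direction (x₁/a², y₁/b²). -/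
noncomputable section

open EuclideanGeometry Real

set_option maxHeartbeats 1000000
open Complex

lemma perp_scalar (x y A B : ℝ) (h : x*A + y*B = 0) (hAB : ¬(A = 0 ∧ B = 0)) :
    ∃ ν : ℝ, x = -ν*B ∧ y = ν*A := by
  by_cases hA : A = 0
  · have hB : B ≠ 0 := fun hB => hAB ⟨hA, hB⟩
    have hy : y = 0 := by
      have : y * B = 0 := by linear_combination h - x*hA
      exact (mul_eq_zero.mp this).resolve_right hB
    exact ⟨-x/B, by field_simp, by rw [hy, hA]; ring⟩
  · refine ⟨y/A, ?_, by field_simp⟩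
    field_simp
    linear_combination h

lemma star_eq (ρ γ u1 v1 u2 v2 u3 v3 : ℝ)
    (hα : (1:ℝ) - ρ ≠ 0) (hβ : (1:ℝ) + ρ ≠ 0)
    (c1 : u1^2 + v1^2 = 1) (c2 : u2^2 + v2^2 = 1) (c3 : u3^2 + v3^2 = 1)
    (E12 : (1-ρ)*(u1*u2) + (1+ρ)*(v1*v2) = γ)
    (E31 : (1-ρ)*(u3*u1) + (1+ρ)*(v3*v1) = γ)
    (d23 : ¬(u2 = u3 ∧ v2 = v3)) :
    (((u2:ℂ) + v2*I) + ((u3:ℂ) + v3*I)) * (((u1:ℂ) + v1*I)^2 - (ρ:ℂ))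
      = 2*(γ:ℂ)*(((u1:ℂ) + v1*I)*(((u2:ℂ) + v2*I))*(((u3:ℂ) + v3*I))) := by
  have F1 : u1*((1-ρ)*(u2-u3)) + v1*((1+ρ)*(v2-v3)) = 0 := by
    linear_combination E12 - E31
  have hZ : ¬((1-ρ)*(u2-u3) = 0 ∧ (1+ρ)*(v2-v3) = 0) := by
    rintro ⟨hA, hB⟩
    have h1 : u2 = u3 := by
      rcases mul_eq_zero.mp hA with h | h
      · exact absurd h hα
      · linarith
    have h2 : v2 = v3 := by
      rcases mul_eq_zero.mp hB with h | h
      · exact absurd h hβ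
      · linarith
    exact d23 ⟨h1, h2⟩
  obtain ⟨ν, hu1, hv1⟩ := perp_scalar u1 v1 _ _ F1 hZ
  rw [hu1, hv1] at E12
  have γ1 : ν*(1-ρ)*(1+ρ)*(u2*v3-u3*v2) = γ := by linear_combination E12
  have R1 : (1-ρ)*u1*(u2*v3-u3*v2) = -(γ*(v2-v3)) := by
    rw [hu1]; linear_combination -(v2-v3)*γ1
  have R2 : (1+ρ)*v1*(u2*v3-u3*v2) = γ*(u2-u3) := by
    rw [hv1]; linear_combination (u2-u3)*γ1
  have R1c := congrArg (Complex.ofReal) R1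
  have R2c := congrArg (Complex.ofReal) R2
  push_cast at R1c R2c
  have c1c : ((u1:ℂ) + v1*I)*((u1:ℂ) - v1*I) = 1 := by
    have := congrArg (Complex.ofReal) c1
    push_cast at this
    linear_combination this - (v1:ℂ)^2*Complex.I_sq
  have c2c : ((u2:ℂ) + v2*I)*((u2:ℂ) - v2*I) = 1 := by
    have := congrArg (Complex.ofReal) c2
    push_cast at this
    linear_combination this - (v2:ℂ)^2*Complex.I_sq
  have c3c : ((u3:ℂ) + v3*I)*((u3:ℂ) - v3*I) = 1 := by
    have := congrArg (Complex.ofReal) c3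
    push_cast at this
    linear_combination this - (v3:ℂ)^2*Complex.I_sq
  have CE1 : ((u2:ℂ)*v3 - u3*v2)*((((u1:ℂ) + v1*I)) - (ρ:ℂ)*(((u1:ℂ) - v1*I)))
      = I*(γ:ℂ)*((((u2:ℂ) + v2*I)) - (((u3:ℂ) + v3*I))) := by
    linear_combination R1c + I*R2c - (γ:ℂ)*((v2:ℂ)-v3)*Complex.I_sq
  have CX1 : ((((u3:ℂ) + v3*I))^2 - (((u2:ℂ) + v2*I))^2) * ((((u1:ℂ) + v1*I))^2 - (ρ:ℂ))
      = 2*(γ:ℂ)*((((u3:ℂ) + v3*I)) - (((u2:ℂ) + v2*I)))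
          * (((u1:ℂ) + v1*I)*(((u2:ℂ) + v2*I))*(((u3:ℂ) + v3*I))) := by
    linear_combination (2*I*(((u1:ℂ) + v1*I)*(((u2:ℂ) + v2*I))*(((u3:ℂ) + v3*I))))*CE1
      - 2*(γ:ℂ)*((((u3:ℂ) + v3*I)) - (((u2:ℂ) + v2*I)))
          *(((u1:ℂ) + v1*I)*(((u2:ℂ) + v2*I))*(((u3:ℂ) + v3*I)))*Complex.I_sq
      + (ρ:ℂ)*((((u3:ℂ) + v3*I))^2 - (((u2:ℂ) + v2*I))^2)*c1c
      - ((u1:ℂ) + v1*I)*(((u1:ℂ) + v1*I) - (ρ:ℂ)*((u1:ℂ) - v1*I))*(((u3:ℂ) + v3*I))^2*c2c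
      + ((u1:ℂ) + v1*I)*(((u1:ℂ) + v1*I) - (ρ:ℂ)*((u1:ℂ) - v1*I))*(((u2:ℂ) + v2*I))^2*c3c
  have hzd : (((u3:ℂ) + v3*I)) - (((u2:ℂ) + v2*I)) ≠ 0 := by
    intro h
    have h' := sub_eq_zero.mp h
    apply d23
    constructor
    · have := congrArg Complex.re h'
      simpa using this.symm
    · have := congrArg Complex.im h'
      simpa using this.symm
  have hsplit : ((((u3:ℂ) + v3*I)) - (((u2:ℂ) + v2*I))) *
      ((((u2:ℂ) + v2*I) + ((u3:ℂ) + v3*I)) * (((u1:ℂ) + v1*I)^2 - (ρ:ℂ))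
        - 2*(γ:ℂ)*(((u1:ℂ) + v1*I)*(((u2:ℂ) + v2*I))*(((u3:ℂ) + v3*I)))) = 0 := by
    linear_combination CX1
  have := (mul_eq_zero.mp hsplit).resolve_left hzd
  linear_combination this

lemma final_step (ρ γ : ℝ) (z1 z2 z3 : ℂ)
    (circ1 : z1 * (starRingEnd ℂ) z1 = 1)
    (circ2 : z2 * (starRingEnd ℂ) z2 = 1)
    (circ3 : z3 * (starRingEnd ℂ) z3 = 1)
    (h12 : z1 ≠ z2)
    (s1 : (z2+z3)*(z1^2-(ρ:ℂ)) = 2*(γ:ℂ)*(z1*z2*z3))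
    (s2 : (z3+z1)*(z2^2-(ρ:ℂ)) = 2*(γ:ℂ)*(z1*z2*z3))
    (s3 : (z1+z2)*(z3^2-(ρ:ℂ)) = 2*(γ:ℂ)*(z1*z2*z3)) :
    ρ^2 = 1 + 2*γ := by
  have h0 : (z1 - z2) * ((z1*z2 + z1*z3 + z2*z3) + (ρ:ℂ)) = 0 := by
    linear_combination s1 - s2
  have E2eq : z1*z2 + z1*z3 + z2*z3 = -(ρ:ℂ) := by
    have := (mul_eq_zero.mp h0).resolve_left (sub_ne_zero.mpr h12)
    linear_combination this
  have E2c := congrArg (starRingEnd ℂ) E2eq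
  simp only [map_add, map_mul, map_neg, Complex.conj_ofReal] at E2c
  have E1eq : z1 + z2 + z3 = -(ρ:ℂ)*(z1*z2*z3) := by
    linear_combination (z1*z2*z3)*E2c - (z3*z2*((starRingEnd ℂ) z2))*circ1 - z3*circ2
      - (z2*z3*((starRingEnd ℂ) z3))*circ1 - z2*circ3
      - (z1*z3*((starRingEnd ℂ) z3))*circ2 - z1*circ3
  have hz1 : z1 ≠ 0 := left_ne_zero_of_mul_eq_one circ1
  have hz2 : z2 ≠ 0 := left_ne_zero_of_mul_eq_one circ2
  have hz3 : z3 ≠ 0 := left_ne_zero_of_mul_eq_one circ3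
  have hQ : z1*z2*z3 ≠ 0 := by
    exact mul_ne_zero (mul_ne_zero hz1 hz2) hz3
  have hfin : (((ρ:ℂ))^2 - 1 - 2*(γ:ℂ)) * (z1*z2*z3) = 0 := by
    linear_combination s3 - z3*E2eq + (ρ:ℂ)*E1eq
  have hc : ((ρ:ℂ))^2 - 1 - 2*(γ:ℂ) = 0 := (mul_eq_zero.mp hfin).resolve_right hQ
  have hr : ((ρ^2 - 1 - 2*γ : ℝ) : ℂ) = 0 := by push_cast; linear_combination hc
  have := Complex.ofReal_eq_zero.mp hr
  linarith

lemma key_alg (K m n u1 v1 u2 v2 u3 v3 : ℝ)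
    (hK : 0 < K) (hc : 0 < m - n)
    (c1 : u1^2 + v1^2 = 1) (c2 : u2^2 + v2^2 = 1) (c3 : u3^2 + v3^2 = 1)
    (e12 : K * ((m+n) - (m-n)*(u1*u2 - v1*v2)) = 1 - u1*u2 - v1*v2)
    (e23 : K * ((m+n) - (m-n)*(u2*u3 - v2*v3)) = 1 - u2*u3 - v2*v3)
    (e31 : K * ((m+n) - (m-n)*(u3*u1 - v3*v1)) = 1 - u3*u1 - v3*v1)
    (d12 : ¬(u1 = u2 ∧ v1 = v2)) (d23 : ¬(u2 = u3 ∧ v2 = v3))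
    (d31 : ¬(u3 = u1 ∧ v3 = v1)) :
    K^2*(m-n)^2 + 2*K*(m+n) - 3 = 0 := by
  have hρpos : 0 < K*(m-n) := mul_pos hK hc
  have hβ : (1:ℝ) + K*(m-n) ≠ 0 := by positivity
  have E12 : (1-K*(m-n))*(u1*u2) + (1+K*(m-n))*(v1*v2) = 1 - K*(m+n) := by
    linear_combination e12
  have E23 : (1-K*(m-n))*(u2*u3) + (1+K*(m-n))*(v2*v3) = 1 - K*(m+n) := by
    linear_combination e23
  have E31 : (1-K*(m-n))*(u3*u1) + (1+K*(m-n))*(v3*v1) = 1 - K*(m+n) := by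
    linear_combination e31
  by_cases hα : (1:ℝ) - K*(m-n) = 0
  · -- α = 0 case : must show K*(m+n) = 1
    have h12 : 2*(v1*v2) = 1 - K*(m+n) := by linear_combination E12 + (v1*v2 - u1*u2)*hα
    have h23 : 2*(v2*v3) = 1 - K*(m+n) := by linear_combination E23 + (v2*v3 - u2*u3)*hα
    have h31 : 2*(v3*v1) = 1 - K*(m+n) := by linear_combination E31 + (v3*v1 - u3*u1)*hα
    by_cases hγ : 1 - K*(m+n) = 0
    · linear_combination -(1+K*(m-n))*hα - 2*hγ
    · exfalso
      have hv1 : v1 ≠ 0 := by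
        intro h; exact hγ (by linear_combination -h12 + 2*v2*h)
      have hv2 : v2 ≠ 0 := by
        intro h; exact hγ (by linear_combination -h12 + 2*v1*h)
      have hv3 : v3 ≠ 0 := by
        intro h; exact hγ (by linear_combination -h31 + 2*v1*h)
      have e1 : v1*(v2 - v3) = 0 := by linear_combination h12/2 - h31/2
      have hv23 : v2 = v3 := by
        have := (mul_eq_zero.mp e1).resolve_left hv1
        linarith
      have e2 : v2*(v1 - v3) = 0 := by linear_combination h12/2 - h23/2
      have hv13 : v1 = v3 := by
        have := (mul_eq_zero.mp e2).resolve_left hv2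
        linarith
      have hu13 : (u1 - u3)*(u1 + u3) = 0 := by
        linear_combination c1 - c3 - (v1 + v3)*hv13
      have hu31 : u3 = -u1 := by
        rcases mul_eq_zero.mp hu13 with h | h
        · exact absurd ⟨by linarith, hv13.symm⟩ d31
        · linarith
      have hu12 : (u1 - u2)*(u1 + u2) = 0 := by
        linear_combination c1 - c2 - (v1 + v2)*(hv13.trans hv23.symm)
      have hu21 : u2 = -u1 := by
        rcases mul_eq_zero.mp hu12 with h | h
        · exact absurd ⟨by linarith, hv13.trans hv23.symm⟩ d12
        · linarith
      exact d23 ⟨by linarith, hv23⟩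
  · -- main case
    have s1 := star_eq (K*(m-n)) (1-K*(m+n)) u1 v1 u2 v2 u3 v3 hα hβ c1 c2 c3 E12 E31 d23
    have s2 := star_eq (K*(m-n)) (1-K*(m+n)) u2 v2 u3 v3 u1 v1 hα hβ c2 c3 c1 E23 E12 d31
    have s3 := star_eq (K*(m-n)) (1-K*(m+n)) u3 v3 u1 v1 u2 v2 hα hβ c3 c1 c2 E31 E23 d12
    have hst1 : (starRingEnd ℂ) ((u1:ℂ) + v1*I) = (u1:ℂ) - v1*I := by
      simp [map_add, map_mul, Complex.conj_ofReal, Complex.conj_I]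
      ring
    have hst2 : (starRingEnd ℂ) ((u2:ℂ) + v2*I) = (u2:ℂ) - v2*I := by
      simp [map_add, map_mul, Complex.conj_ofReal, Complex.conj_I]
      ring
    have hst3 : (starRingEnd ℂ) ((u3:ℂ) + v3*I) = (u3:ℂ) - v3*I := by
      simp [map_add, map_mul, Complex.conj_ofReal, Complex.conj_I]
      ring
    have circ1 : ((u1:ℂ) + v1*I) * (starRingEnd ℂ) ((u1:ℂ) + v1*I) = 1 := by
      rw [hst1]
      have := congrArg (Complex.ofReal) c1
      push_cast at this
      linear_combination this - (v1:ℂ)^2*Complex.I_sq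
    have circ2 : ((u2:ℂ) + v2*I) * (starRingEnd ℂ) ((u2:ℂ) + v2*I) = 1 := by
      rw [hst2]
      have := congrArg (Complex.ofReal) c2
      push_cast at this
      linear_combination this - (v2:ℂ)^2*Complex.I_sq
    have circ3 : ((u3:ℂ) + v3*I) * (starRingEnd ℂ) ((u3:ℂ) + v3*I) = 1 := by
      rw [hst3]
      have := congrArg (Complex.ofReal) c3
      push_cast at this
      linear_combination this - (v3:ℂ)^2*Complex.I_sq
    have h12 : ((u1:ℂ) + v1*I) ≠ ((u2:ℂ) + v2*I) := by
      intro h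
      apply d12
      constructor
      · have := congrArg Complex.re h; simpa using this
      · have := congrArg Complex.im h; simpa using this
    have key := final_step (K*(m-n)) (1-K*(m+n))
      ((u1:ℂ) + v1*I) ((u2:ℂ) + v2*I) ((u3:ℂ) + v3*I)
      circ1 circ2 circ3 h12
      (by linear_combination s1) (by linear_combination s2) (by linear_combination s3)
    linear_combination key

lemma pt_norm_sq (w : Pt) : ‖w‖^2 = (w 0)^2 + (w 1)^2 := by
  rw [EuclideanSpace.norm_eq, Real.sq_sqrt (by positivity)]
  simp [Fin.sum_univ_two, Real.norm_eq_abs, _root_.sq_abs]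

lemma pt_ext (P Q : Pt) (h0 : P 0 = Q 0) (h1 : P 1 = Q 1) : P = Q := by
  ext i; fin_cases i <;> simpa

lemma cross_dot (s0 s1 n0 n1 d0 d1 : ℝ) (h1 : s0*n1 = s1*n0)
    (h2 : s0*d0 + s1*d1 = 0) (hs : ¬(s0 = 0 ∧ s1 = 0)) :
    n0*d0 + n1*d1 = 0 := by
  by_cases h0 : s0 = 0
  · have hs1 : s1 ≠ 0 := fun h => hs ⟨h0, h⟩
    have hn0 : n0 = 0 := by
      have : s1 * n0 = 0 := by linear_combination -h1 + n1*h0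
      exact (mul_eq_zero.mp this).resolve_left hs1
    have hd1 : d1 = 0 := by
      have : s1 * d1 = 0 := by linear_combination h2 - d0*h0
      exact (mul_eq_zero.mp this).resolve_left hs1
    rw [hn0, hd1]; ring
  · have : s0 * (n0*d0 + n1*d1) = 0 := by linear_combination n0*h2 + d1*h1
    have := (mul_eq_zero.mp this).resolve_left h0
    linarith

/-- Billiard reflection implies equality of normal components (Joachimsthal step). -/
lemma reflect_J (a b : ℝ) (ha : a ≠ 0) (hb : b ≠ 0) (P Q R : Pt)
    (hP : onEllipse a b P) (hQ : onEllipse a b Q) (hR : onEllipse a b R)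
    (hPQ : P ≠ Q) (hPR : P ≠ R) (hQR : Q ≠ R)
    (hrefl : reflects a b P Q R) :
    ‖Q - P‖⁻¹ * ((Q 0 - P 0)*(P 0)/a^2 + (Q 1 - P 1)*(P 1)/b^2)
      = ‖R - P‖⁻¹ * ((R 0 - P 0)*(P 0)/a^2 + (R 1 - P 1)*(P 1)/b^2) := by
  have hLQ : 0 < ‖Q - P‖ := by rw [norm_pos_iff]; exact sub_ne_zero.mpr hPQ.symm
  have hLR : 0 < ‖R - P‖ := by rw [norm_pos_iff]; exact sub_ne_zero.mpr hPR.symm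
  have hQsq : ‖Q - P‖^2 = (Q 0 - P 0)^2 + (Q 1 - P 1)^2 := by
    rw [pt_norm_sq]; simp
  have hRsq : ‖R - P‖^2 = (R 0 - P 0)^2 + (R 1 - P 1)^2 := by
    rw [pt_norm_sq]; simp
  unfold reflects at hrefl
  simp only [PiLp.add_apply, PiLp.smul_apply, PiLp.sub_apply, smul_eq_mul] at hrefl
  set LQ := ‖Q - P‖
  set LR := ‖R - P‖
  have hLQ' : LQ ≠ 0 := ne_of_gt hLQ
  have hLR' : LR ≠ 0 := ne_of_gt hLR
  set s0 := LQ⁻¹ * (Q 0 - P 0) + LR⁻¹ * (R 0 - P 0) with hs0d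
  set s1 := LQ⁻¹ * (Q 1 - P 1) + LR⁻¹ * (R 1 - P 1) with hs1d
  by_cases hs : s0 = 0 ∧ s1 = 0
  · -- degenerate: P, Q, R collinear; contradiction with 3 distinct points on ellipse
    exfalso
    obtain ⟨hx0, hy0⟩ := hs
    rw [hs0d] at hx0
    rw [hs1d] at hy0
    have hx : LR*(Q 0 - P 0) + LQ*(R 0 - P 0) = 0 := by
      have h := congrArg (fun z => (LQ*LR)*z) hx0
      simp only [mul_zero] at h
      field_simp at h
      linarith
    have hy : LR*(Q 1 - P 1) + LQ*(R 1 - P 1) = 0 := by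
      have h := congrArg (fun z => (LQ*LR)*z) hy0
      simp only [mul_zero] at h
      field_simp at h
      linarith
    have heP : b^2*(P 0)^2 + a^2*(P 1)^2 = a^2*b^2 := by
      have h2 := hP; unfold onEllipse at h2; field_simp at h2; linarith
    have heQ : b^2*(Q 0)^2 + a^2*(Q 1)^2 = a^2*b^2 := by
      have h2 := hQ; unfold onEllipse at h2; field_simp at h2; linarith
    have heR : b^2*(R 0)^2 + a^2*(R 1)^2 = a^2*b^2 := by
      have h2 := hR; unfold onEllipse at h2; field_simp at h2; linarith
    have hne : ¬((R 0 - P 0) = 0 ∧ (R 1 - P 1) = 0) := by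
      rintro ⟨h1, h2⟩
      exact hPR (pt_ext P R (by linarith) (by linarith))
    have hSr : 0 < b^2*(R 0 - P 0)^2 + a^2*(R 1 - P 1)^2 := by
      by_cases hh : R 0 - P 0 = 0
      · have h2 : R 1 - P 1 ≠ 0 := fun h => hne ⟨hh, h⟩
        have h3 : 0 < (R 1 - P 1)^2 :=
          lt_of_le_of_ne (sq_nonneg _) (Ne.symm (pow_ne_zero 2 h2))
        have ha2 : 0 < a^2 := lt_of_le_of_ne (sq_nonneg a) (Ne.symm (pow_ne_zero 2 ha))
        nlinarith [sq_nonneg (R 0 - P 0), sq_nonneg b]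
      · have h3 : 0 < (R 0 - P 0)^2 :=
          lt_of_le_of_ne (sq_nonneg _) (Ne.symm (pow_ne_zero 2 hh))
        have hb2 : 0 < b^2 := lt_of_le_of_ne (sq_nonneg b) (Ne.symm (pow_ne_zero 2 hb))
        nlinarith [sq_nonneg (R 1 - P 1), sq_nonneg a]
    have hcomb : LQ * (b^2*(R 0 - P 0)^2 + a^2*(R 1 - P 1)^2) * (LQ + LR) = 0 := by
      linear_combination LR^2*heQ - LR^2*heP + LQ*LR*heR - LQ*LR*heP
        + (-b^2*(LR*(Q 0 - P 0) - LQ*(R 0 - P 0)) - 2*LR*b^2*(P 0))*hx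
        + (-a^2*(LR*(Q 1 - P 1) - LQ*(R 1 - P 1)) - 2*LR*a^2*(P 1))*hy
    have hpos : 0 < LQ * (b^2*(R 0 - P 0)^2 + a^2*(R 1 - P 1)^2) * (LQ + LR) :=
      mul_pos (mul_pos hLQ hSr) (by linarith)
    exact absurd hcomb (ne_of_gt hpos)
  · -- main case
    have hdot : s0*(LQ⁻¹*(Q 0 - P 0) - LR⁻¹*(R 0 - P 0))
        + s1*(LQ⁻¹*(Q 1 - P 1) - LR⁻¹*(R 1 - P 1)) = 0 := by
      rw [hs0d, hs1d]
      have e1 : (LQ⁻¹*(Q 0 - P 0))^2 + (LQ⁻¹*(Q 1 - P 1))^2 = 1 := by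
        rw [mul_pow, mul_pow, ← mul_add, ← hQsq]
        field_simp
      have e2 : (LR⁻¹*(R 0 - P 0))^2 + (LR⁻¹*(R 1 - P 1))^2 = 1 := by
        rw [mul_pow, mul_pow, ← mul_add, ← hRsq]
        field_simp
      linear_combination e1 - e2
    have hcross : s0*(P 1/b^2) = s1*(P 0/a^2) := by linear_combination -hrefl
    have := cross_dot s0 s1 (P 0/a^2) (P 1/b^2)
      (LQ⁻¹*(Q 0 - P 0) - LR⁻¹*(R 0 - P 0)) (LQ⁻¹*(Q 1 - P 1) - LR⁻¹*(R 1 - P 1))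
      hcross hdot hs
    linear_combination this

lemma one_sub_g_ne (u1 v1 u2 v2 : ℝ) (c1 : u1^2+v1^2=1) (c2 : u2^2+v2^2=1)
    (d : ¬(u1 = u2 ∧ v1 = v2)) : 1 - (u1*u2 + v1*v2) ≠ 0 := by
  intro h
  have hsum : (u1-u2)^2 + (v1-v2)^2 = 0 := by linear_combination c1 + c2 + 2*h
  have h1 : (u1-u2)^2 = 0 := by nlinarith [sq_nonneg (u1-u2), sq_nonneg (v1-v2)]
  have h2 : (v1-v2)^2 = 0 := by nlinarith [sq_nonneg (u1-u2), sq_nonneg (v1-v2)]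
  exact d ⟨sub_eq_zero.mp (sq_eq_zero_iff.mp h1), sub_eq_zero.mp (sq_eq_zero_iff.mp h2)⟩

lemma chord_eq (m n J L u1 v1 u2 v2 : ℝ)
    (c1 : u1^2+v1^2 = 1) (c2 : u2^2+v2^2 = 1)
    (hL : L^2 = m*(u2-u1)^2 + n*(v2-v1)^2)
    (hJ : J*L = u1*u2 + v1*v2 - 1)
    (hg : 1 - (u1*u2 + v1*v2) ≠ 0) :
    J^2 * ((m+n) - (m-n)*(u1*u2 - v1*v2)) = 1 - u1*u2 - v1*v2 := by
  have hKL : J^2*(m*(u2-u1)^2 + n*(v2-v1)^2) = (1 - (u1*u2+v1*v2))^2 := by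
    rw [← hL]; linear_combination (J*L + (u1*u2+v1*v2) - 1)*hJ
  apply mul_left_cancel₀ hg
  linear_combination hKL + J^2*(-(m-n)*v2^2 - n)*c1 + J^2*(-(m-n)*(1-u1^2) - n)*c2

lemma gconv (a b x y x' y' : ℝ) (ha : a ≠ 0) (hb : b ≠ 0)
    (he : b^2*x^2 + a^2*y^2 = a^2*b^2) :
    (x' - x)*x/a^2 + (y' - y)*y/b^2 = (x/a)*(x'/a) + (y/b)*(y'/b) - 1 := by
  field_simp
  linear_combination (-1)*he

lemma two_sq_pos (x y : ℝ) (h : ¬(x = 0 ∧ y = 0)) : 0 < x^2 + y^2 := by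
  by_cases hx : x = 0
  · have hy : y ≠ 0 := fun h' => h ⟨hx, h'⟩
    have := lt_of_le_of_ne (sq_nonneg y) (Ne.symm (pow_ne_zero 2 hy))
    nlinarith [sq_nonneg x]
  · have := lt_of_le_of_ne (sq_nonneg x) (Ne.symm (pow_ne_zero 2 hx))
    nlinarith [sq_nonneg y]

/-- The cosine of the angle between side P1P2 and the unit normal at P1. -/
theorem cos_exit_angle (a b : ℝ) (hb : 0 < b) (hab : b < a)
    (P₁ P₂ P₃ : Pt) (h : IsOrbit a b P₁ P₂ P₃) :
    |((‖P₂ - P₁‖⁻¹ • (P₂ - P₁)) 0) *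
        ((Real.sqrt ((P₁ 0 / a ^ 2) ^ 2 + (P₁ 1 / b ^ 2) ^ 2))⁻¹ * (P₁ 0 / a ^ 2)) +
     ((‖P₂ - P₁‖⁻¹ • (P₂ - P₁)) 1) *
        ((Real.sqrt ((P₁ 0 / a ^ 2) ^ 2 + (P₁ 1 / b ^ 2) ^ 2))⁻¹ * (P₁ 1 / b ^ 2))| =
    a ^ 2 * b *
        Real.sqrt (2 * Real.sqrt (a ^ 4 - a ^ 2 * b ^ 2 + b ^ 4) - a ^ 2 - b ^ 2) /
      ((a ^ 2 - b ^ 2) * Real.sqrt (a ^ 4 - (a ^ 2 - b ^ 2) * (P₁ 0) ^ 2)) := by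
  obtain ⟨h12, h23, h13, hE1, hE2, hE3, hr1, hr2, hr3⟩ := h
  have ha : 0 < a := lt_trans hb hab
  have ha' : a ≠ 0 := ne_of_gt ha
  have hb' : b ≠ 0 := ne_of_gt hb
  have hcpos : 0 < a^2 - b^2 :=
    sub_pos.mpr (pow_lt_pow_left₀ hab (le_of_lt hb) two_ne_zero)
  -- ellipse polynomial forms
  have he1 : b^2*(P₁ 0)^2 + a^2*(P₁ 1)^2 = a^2*b^2 := by
    have h2 := hE1; unfold onEllipse at h2; field_simp at h2; linarith
  have he2 : b^2*(P₂ 0)^2 + a^2*(P₂ 1)^2 = a^2*b^2 := by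
    have h2 := hE2; unfold onEllipse at h2; field_simp at h2; linarith
  have he3 : b^2*(P₃ 0)^2 + a^2*(P₃ 1)^2 = a^2*b^2 := by
    have h2 := hE3; unfold onEllipse at h2; field_simp at h2; linarith
  -- circles
  have c1 : (P₁ 0/a)^2 + (P₁ 1/b)^2 = 1 := by
    field_simp; linear_combination he1
  have c2 : (P₂ 0/a)^2 + (P₂ 1/b)^2 = 1 := by
    field_simp; linear_combination he2
  have c3 : (P₃ 0/a)^2 + (P₃ 1/b)^2 = 1 := by
    field_simp; linear_combination he3
  -- norms
  have hL1 : 0 < ‖P₂ - P₁‖ := by rw [norm_pos_iff]; exact sub_ne_zero.mpr h12.symm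
  have hL2 : 0 < ‖P₃ - P₂‖ := by rw [norm_pos_iff]; exact sub_ne_zero.mpr h23.symm
  have hL3 : 0 < ‖P₁ - P₃‖ := by rw [norm_pos_iff]; exact sub_ne_zero.mpr h13
  have hL1sq : ‖P₂ - P₁‖^2 = a^2*(P₂ 0/a - P₁ 0/a)^2 + b^2*(P₂ 1/b - P₁ 1/b)^2 := by
    rw [pt_norm_sq]; simp; field_simp
  have hL2sq : ‖P₃ - P₂‖^2 = a^2*(P₃ 0/a - P₂ 0/a)^2 + b^2*(P₃ 1/b - P₂ 1/b)^2 := by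
    rw [pt_norm_sq]; simp; field_simp
  have hL3sq : ‖P₁ - P₃‖^2 = a^2*(P₁ 0/a - P₃ 0/a)^2 + b^2*(P₁ 1/b - P₃ 1/b)^2 := by
    rw [pt_norm_sq]; simp; field_simp
  -- Joachimsthal
  have hJa := reflect_J a b ha' hb' P₂ P₃ P₁ hE2 hE3 hE1 h23 h12.symm h13.symm hr2
  have hJb := reflect_J a b ha' hb' P₃ P₁ P₂ hE3 hE1 hE2 h13.symm h23.symm h12 hr3
  rw [norm_sub_rev P₁ P₂] at hJa
  rw [norm_sub_rev P₂ P₃] at hJb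
  rw [gconv a b (P₂ 0) (P₂ 1) (P₃ 0) (P₃ 1) ha' hb' he2,
      gconv a b (P₂ 0) (P₂ 1) (P₁ 0) (P₁ 1) ha' hb' he2] at hJa
  rw [gconv a b (P₃ 0) (P₃ 1) (P₁ 0) (P₁ 1) ha' hb' he3,
      gconv a b (P₃ 0) (P₃ 1) (P₂ 0) (P₂ 1) ha' hb' he3] at hJb
  -- J
  set J := ‖P₂ - P₁‖⁻¹ * ((P₁ 0/a)*(P₂ 0/a) + (P₁ 1/b)*(P₂ 1/b) - 1) with hJdef
  have hL1' : ‖P₂ - P₁‖ ≠ 0 := ne_of_gt hL1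
  have hL2' : ‖P₃ - P₂‖ ≠ 0 := ne_of_gt hL2
  have hL3' : ‖P₁ - P₃‖ ≠ 0 := ne_of_gt hL3
  have hJ1 : J*‖P₂ - P₁‖ = (P₁ 0/a)*(P₂ 0/a) + (P₁ 1/b)*(P₂ 1/b) - 1 := by
    rw [hJdef]; field_simp
  have hJ2 : J*‖P₃ - P₂‖ = (P₂ 0/a)*(P₃ 0/a) + (P₂ 1/b)*(P₃ 1/b) - 1 := by
    have : J = ‖P₃ - P₂‖⁻¹ * ((P₂ 0/a)*(P₃ 0/a) + (P₂ 1/b)*(P₃ 1/b) - 1) := by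
      rw [hJdef, hJa]
      ring_nf
    rw [this]; field_simp
  have hJ3 : J*‖P₁ - P₃‖ = (P₃ 0/a)*(P₁ 0/a) + (P₃ 1/b)*(P₁ 1/b) - 1 := by
    have h5 : J = ‖P₃ - P₂‖⁻¹ * ((P₂ 0/a)*(P₃ 0/a) + (P₂ 1/b)*(P₃ 1/b) - 1) := by
      rw [hJdef, hJa]
      ring_nf
    have h6 : J = ‖P₁ - P₃‖⁻¹ * ((P₃ 0/a)*(P₁ 0/a) + (P₃ 1/b)*(P₁ 1/b) - 1) := by
      linear_combination h5 - hJb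
    rw [h6]; field_simp
  -- distinctness in uv coordinates
  have d12 : ¬(P₁ 0/a = P₂ 0/a ∧ P₁ 1/b = P₂ 1/b) := by
    rintro ⟨hu, hv⟩
    refine h12 (pt_ext _ _ ?_ ?_)
    · field_simp at hu; exact hu
    · field_simp at hv; exact hv
  have d23 : ¬(P₂ 0/a = P₃ 0/a ∧ P₂ 1/b = P₃ 1/b) := by
    rintro ⟨hu, hv⟩
    refine h23 (pt_ext _ _ ?_ ?_)
    · field_simp at hu; exact hu
    · field_simp at hv; exact hv
  have d31 : ¬(P₃ 0/a = P₁ 0/a ∧ P₃ 1/b = P₁ 1/b) := by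
    rintro ⟨hu, hv⟩
    refine h13.symm (pt_ext _ _ ?_ ?_)
    · field_simp at hu; exact hu
    · field_simp at hv; exact hv
  have hg12 := one_sub_g_ne _ _ _ _ c1 c2 d12
  have hg23 := one_sub_g_ne _ _ _ _ c2 c3 d23
  have hg31 := one_sub_g_ne _ _ _ _ c3 c1 d31
  -- chord equations
  have e12 := chord_eq (a^2) (b^2) J ‖P₂ - P₁‖ (P₁ 0/a) (P₁ 1/b) (P₂ 0/a) (P₂ 1/b)
    c1 c2 hL1sq hJ1 hg12
  have e23 := chord_eq (a^2) (b^2) J ‖P₃ - P₂‖ (P₂ 0/a) (P₂ 1/b) (P₃ 0/a) (P₃ 1/b)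
    c2 c3 hL2sq hJ2 hg23
  have e31 := chord_eq (a^2) (b^2) J ‖P₁ - P₃‖ (P₃ 0/a) (P₃ 1/b) (P₁ 0/a) (P₁ 1/b)
    c3 c1 hL3sq hJ3 hg31
  -- J ≠ 0
  have hJne : J ≠ 0 := by
    intro h0
    apply hg12
    rw [h0] at hJ1
    simp at hJ1
    linarith
  have hK : 0 < J^2 := lt_of_le_of_ne (sq_nonneg J) (Ne.symm (pow_ne_zero 2 hJne))
  have keyq := key_alg (J^2) (a^2) (b^2) (P₁ 0/a) (P₁ 1/b) (P₂ 0/a) (P₂ 1/b)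
    (P₃ 0/a) (P₃ 1/b) hK hcpos c1 c2 c3 e12 e23 e31 d12 d23 d31
  -- endgame
  have hb2 : 0 < b^2 := by positivity
  have hx2 : (P₁ 0)^2 ≤ a^2 := by
    have h1 : 0 ≤ a^2*(P₁ 1)^2 := mul_nonneg (sq_nonneg a) (sq_nonneg (P₁ 1))
    have h2 : b^2*(P₁ 0)^2 ≤ b^2*a^2 := by linarith
    exact le_of_mul_le_mul_left h2 hb2
  have hW : 0 < a^4 - (a^2-b^2)*(P₁ 0)^2 := by
    have h3 : (a^2-b^2)*(P₁ 0)^2 ≤ (a^2-b^2)*a^2 :=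
      mul_le_mul_of_nonneg_left hx2 (le_of_lt hcpos)
    have h4 : (a^2-b^2)*a^2 = a^4 - a^2*b^2 := by ring
    have h5 : 0 < a^2*b^2 := by positivity
    linarith
  have hWs : Real.sqrt (a^4 - (a^2-b^2)*(P₁ 0)^2) > 0 := Real.sqrt_pos.mpr hW
  have hP1ne : ¬(P₁ 0 = 0 ∧ P₁ 1 = 0) := by
    rintro ⟨hx, hy⟩
    rw [hx, hy] at he1
    have h5 : (0:ℝ) < a^2*b^2 := by positivity
    norm_num at he1
    rcases he1 with h | h
    · exact ha' h
    · exact hb' h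
  have hNpos : 0 < Real.sqrt ((P₁ 0/a^2)^2 + (P₁ 1/b^2)^2) := by
    apply Real.sqrt_pos.mpr
    apply two_sq_pos
    rintro ⟨hx, hy⟩
    exact hP1ne ⟨by field_simp at hx; simpa using hx, by field_simp at hy; simpa using hy⟩
  have hNval : Real.sqrt ((P₁ 0/a^2)^2 + (P₁ 1/b^2)^2)
      = Real.sqrt (a^4 - (a^2-b^2)*(P₁ 0)^2) / (a^2*b) := by
    rw [show (P₁ 0/a^2)^2 + (P₁ 1/b^2)^2 = (a^4 - (a^2-b^2)*(P₁ 0)^2)/(a^2*b)^2 by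
      field_simp; linear_combination (a^2)*he1]
    rw [Real.sqrt_div (le_of_lt hW)]
    rw [Real.sqrt_sq (by positivity)]
  have hdel : Real.sqrt (a^4 - a^2*b^2 + b^4) = (J^2*(a^2-b^2)^2 + a^2 + b^2)/2 := by
    rw [show a^4 - a^2*b^2 + b^4 = ((J^2*(a^2-b^2)^2 + a^2 + b^2)/2)^2 by
      linear_combination (-(a^2-b^2)^2/4)*keyq]
    exact Real.sqrt_sq (by positivity)
  have habs : (_root_.abs J*(a^2-b^2))^2 = J^2*(a^2-b^2)^2 := by rw [mul_pow, _root_.sq_abs]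
  have hsB : Real.sqrt (2*Real.sqrt (a^4 - a^2*b^2 + b^4) - a^2 - b^2) = _root_.abs J*(a^2-b^2) := by
    rw [hdel, show 2*((J^2*(a^2-b^2)^2 + a^2 + b^2)/2) - a^2 - b^2 = (_root_.abs J*(a^2-b^2))^2 by
      rw [habs]; ring]
    exact Real.sqrt_sq (mul_nonneg (_root_.abs_nonneg J) (le_of_lt hcpos))
  -- LHS
  simp only [PiLp.smul_apply, PiLp.sub_apply, smul_eq_mul]
  have hgP1 := gconv a b (P₁ 0) (P₁ 1) (P₂ 0) (P₂ 1) ha' hb' he1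
  have hlhs : ‖P₂ - P₁‖⁻¹ * (P₂ 0 - P₁ 0) *
        ((Real.sqrt ((P₁ 0 / a ^ 2) ^ 2 + (P₁ 1 / b ^ 2) ^ 2))⁻¹ * (P₁ 0 / a ^ 2)) +
      ‖P₂ - P₁‖⁻¹ * (P₂ 1 - P₁ 1) *
        ((Real.sqrt ((P₁ 0 / a ^ 2) ^ 2 + (P₁ 1 / b ^ 2) ^ 2))⁻¹ * (P₁ 1 / b ^ 2))
      = (Real.sqrt ((P₁ 0 / a ^ 2) ^ 2 + (P₁ 1 / b ^ 2) ^ 2))⁻¹ * J := by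
    rw [hJdef]
    linear_combination (Real.sqrt ((P₁ 0 / a ^ 2) ^ 2 + (P₁ 1 / b ^ 2) ^ 2))⁻¹
      * ‖P₂ - P₁‖⁻¹ * hgP1
  rw [hlhs, abs_mul, abs_of_pos (inv_pos.mpr hNpos), hsB, hNval]
  have hc2 : a^2 - b^2 ≠ 0 := ne_of_gt hcpos
  field_simp
end
end

section
/- Every 3-periodic billiard orbit P₁P₂P₃ in the ellipse E has the same perimeter, namely L = ‖P₂ − P₁‖ + ‖P₃ − P₂‖ + ‖P₁ − P₃‖ = 2(δ + a² + b²)·√(2δ − a² − b²)/c². -/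
noncomputable section

open EuclideanGeometry Real

lemma norm_sq_eq (v : Pt) : ‖v‖^2 = (v 0)^2 + (v 1)^2 := by
  rw [EuclideanSpace.norm_eq, Real.sq_sqrt (by positivity)]
  simp [Fin.sum_univ_two, sq_abs]


lemma vertexJ (N0 N1 u0 u1 w0 w1 lu lw : ℝ) (hlu : 0 < lu) (hlw : 0 < lw)
    (hu : lu^2 = u0^2 + u1^2) (hw : lw^2 = w0^2 + w1^2)
    (hX : (u0*lw + w0*lu) * N1 = (u1*lw + w1*lu) * N0)
    (hdu : u0*N0 + u1*N1 < 0) (hdw : w0*N0 + w1*N1 < 0) :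
    (u0*N0 + u1*N1) * lw = (w0*N0 + w1*N1) * lu := by
  have hsum : (u0*N0+u1*N1)*lw + (w0*N0+w1*N1)*lu < 0 := by nlinarith
  have hsq : ((u0*N0+u1*N1)*lw)^2 = ((w0*N0+w1*N1)*lu)^2 := by
    linear_combination (-(N0^2+N1^2)*lw^2)*hu + ((N0^2+N1^2)*lu^2)*hw -
      (lw*(u0*N1-u1*N0) - lu*(w0*N1-w1*N0))*hX
  have hfac : ((u0*N0+u1*N1)*lw - (w0*N0+w1*N1)*lu) * (((u0*N0+u1*N1)*lw + (w0*N0+w1*N1)*lu)) = 0 := by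
    linear_combination hsq
  rcases mul_eq_zero.1 hfac with h|h
  · linarith
  · exact absurd h (by linarith)

set_option maxHeartbeats 1000000

lemma vertexW (A B x y u0 u1 w0 w1 lu lw lo J : ℝ)
    (hB : 0 < B) (hA : 0 < A)
    (hlu : 0 < lu) (hlw : 0 < lw) (hJ : J < 0)
    (hu : lu^2 = u0^2 + u1^2) (hw : lw^2 = w0^2 + w1^2)
    (hdot : 2*(u0*w0 + u1*w1) = lu^2 + lw^2 - lo^2)
    (hE : B*x^2 + A*y^2 = A*B)
    (hX : (u0*lw + w0*lu) * (A*y) = (u1*lw + w1*lu) * (B*x))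
    (hJu : u0*(B*x) + u1*(A*y) = A*B*lu*J) (hJw : w0*(B*x) + w1*(A*y) = A*B*lw*J)
    (hBu : B*u0^2 + A*u1^2 = -2*A*B*J*lu) (hBw : B*w0^2 + A*w1^2 = -2*A*B*J*lw)
    (hBuw : B*u0*w0 + A*u1*w1 = A*B*J*(lo - lu - lw)) :
    0 < (lu+lw)^2 - lo^2 ∧
    ((B*x)^2 + (A*y)^2) * ((lu+lw)^2 - lo^2) = 4*A^2*B^2*J^2*lu*lw ∧
    8*A*B*J^3*lu*lw*(lo - 2*lu - 2*lw) = 4*(A+B)*J^2*lu*lw*((lu+lw)^2-lo^2) - ((lu+lw)^2-lo^2)^2 := by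
  have hJ2 : 0 < J^2 := by nlinarith [mul_pos_of_neg_of_neg hJ hJ]
  have hρpos : 0 < (B*x)^2 + (A*y)^2 := by
    rcases eq_or_ne x 0 with hx|hx
    · rcases eq_or_ne y 0 with hy|hy
      · rw [hx, hy] at hE; norm_num at hE; rcases hE with h|h <;> linarith
      · have : A*y ≠ 0 := mul_ne_zero hA.ne' hy
        positivity
    · have : B*x ≠ 0 := mul_ne_zero hB.ne' hx
      positivity
  have hz0 : ((B*x)^2+(A*y)^2) * (u0*lw + w0*lu) = (B*x)*(2*A*B*J*lu*lw) := by
    linear_combination ((B*x)*lw)*hJu + ((B*x)*lu)*hJw + (A*y)*hX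
  have hz1 : ((B*x)^2+(A*y)^2) * (u1*lw + w1*lu) = (A*y)*(2*A*B*J*lu*lw) := by
    linear_combination ((A*y)*lw)*hJu + ((A*y)*lu)*hJw - (B*x)*hX
  have hEqa' : ((B*x)^2+(A*y)^2) * (lu*lw*((lu+lw)^2 - lo^2)) = 4*A^2*B^2*J^2*lu^2*lw^2 := by
    linear_combination (u0*lw + w0*lu)*hz0 + (u1*lw + w1*lu)*hz1
      + (2*A*B*J*lu*lw*lw)*hJu + (2*A*B*J*lu*lw*lu)*hJw
      + (((B*x)^2+(A*y)^2)*lw^2)*hu + (((B*x)^2+(A*y)^2)*lu^2)*hw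
      - (((B*x)^2+(A*y)^2)*lu*lw)*hdot
  have hRpos : 0 < 4*A^2*B^2*J^2*lu^2*lw^2 := by
    have h1 : (0:ℝ) < 4*A^2*B^2*lu^2*lw^2 := by positivity
    calc (0:ℝ) < (4*A^2*B^2*lu^2*lw^2) * J^2 := mul_pos h1 hJ2
    _ = 4*A^2*B^2*J^2*lu^2*lw^2 := by ring
  have hT : 0 < (lu+lw)^2 - lo^2 := by
    nlinarith [hEqa', hRpos, mul_pos hρpos (mul_pos hlu hlw)]
  have hEqa : ((B*x)^2 + (A*y)^2) * ((lu+lw)^2 - lo^2) = 4*A^2*B^2*J^2*lu*lw := by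
    apply mul_right_cancel₀ (mul_pos hlu hlw).ne'
    linear_combination hEqa'
  refine ⟨hT, hEqa, ?_⟩
  have hz0sq : (((B*x)^2+(A*y)^2))^2 * (u0*lw + w0*lu)^2 = (B*x)^2*(2*A*B*J*lu*lw)^2 := by
    linear_combination (((B*x)^2+(A*y)^2) * (u0*lw + w0*lu) + (B*x)*(2*A*B*J*lu*lw))*hz0
  have hz1sq : (((B*x)^2+(A*y)^2))^2 * (u1*lw + w1*lu)^2 = (A*y)^2*(2*A*B*J*lu*lw)^2 := by
    linear_combination (((B*x)^2+(A*y)^2) * (u1*lw + w1*lu) + (A*y)*(2*A*B*J*lu*lw))*hz1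
  have hBZ : B*(u0*lw + w0*lu)^2 + A*(u1*lw + w1*lu)^2 = 2*A*B*J*lu*lw*(lo - 2*lu - 2*lw) := by
    linear_combination lw^2*hBu + lu^2*hBw + (2*lu*lw)*hBuw
  have hν : B*(B*x)^2 + A*(A*y)^2 = (A+B)*((B*x)^2+(A*y)^2) - A^2*B^2 := by
    linear_combination (-(A*B))*hE
  have hEqb : (((B*x)^2+(A*y)^2))^2 * (2*A*B*J*lu*lw*(lo-2*lu-2*lw)) =
      (2*A*B*J*lu*lw)^2 * ((A+B)*((B*x)^2+(A*y)^2) - A^2*B^2) := by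
    linear_combination B*hz0sq + A*hz1sq - (((B*x)^2+(A*y)^2))^2*hBZ + (2*A*B*J*lu*lw)^2*hν
  have hEqaSq : (((B*x)^2+(A*y)^2) * ((lu+lw)^2 - lo^2))^2 = (4*A^2*B^2*J^2*lu*lw)^2 := by
    linear_combination (((B*x)^2+(A*y)^2) * ((lu+lw)^2 - lo^2) + 4*A^2*B^2*J^2*lu*lw)*hEqa
  have hbig : (4*A^2*B^2*J^2*lu*lw)^2 * (2*A*B*J*lu*lw*(lo-2*lu-2*lw)) =
      (2*A*B*J*lu*lw)^2 * ((A+B)*(4*A^2*B^2*J^2*lu*lw)*((lu+lw)^2-lo^2) - A^2*B^2*((lu+lw)^2-lo^2)^2) := by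
    linear_combination (((lu+lw)^2-lo^2)^2)*hEqb
      - (2*A*B*J*lu*lw*(lo-2*lu-2*lw))*hEqaSq
      + ((2*A*B*J*lu*lw)^2*(A+B)*((lu+lw)^2-lo^2))*hEqa
  have hcan : ((4*A^4*B^4*lu^2*lw^2)*J^2) ≠ 0 :=
    (mul_pos (by positivity : (0:ℝ) < 4*A^4*B^4*lu^2*lw^2) hJ2).ne'
  apply mul_left_cancel₀ hcan
  linear_combination hbig

lemma sqrt_facts (A B δ : ℝ) (hB : 0 < B) (hBA : B < A)
    (hδ : δ^2 = A^2 - A*B + B^2) (hδ0 : 0 ≤ δ) :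
    0 < δ ∧ δ < A + B ∧ A^2+B^2-4*A*B < (A+B)*δ ∧ 4*A*B-A^2-B^2 < (A+B)*δ := by
  have hA : 0 < A := lt_trans hB hBA
  have hδpos : 0 < δ := by nlinarith [mul_pos hB hB]
  have hδlt : δ < A + B := by nlinarith [mul_pos (mul_pos hA hB) hδpos]
  have h9 : ((A+B)*δ)^2 - (A^2+B^2-4*A*B)^2 = 9*A*B*(A-B)^2 := by
    linear_combination ((A+B)^2)*hδ
  have h99 : 0 < 9*A*B*(A-B)^2 := by
    have h' : 0 < A - B := by linarith
    positivity
  have hApBδ : 0 < (A+B)*δ := by positivity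
  exact ⟨hδpos, hδlt, by nlinarith [h9, h99, hApBδ], by nlinarith [h9, h99, hApBδ]⟩

lemma negfact (A B δ M : ℝ) (hB : 0 < B) (hA : 0 < A)
    (hσ : 0 < A+B+δ) (h9σ : 0 < (A+B+δ)^2 - 9*A*B) (hM : 0 ≤ M) :
    M*((A+B+δ)*(9*A*B-(A+B+δ)^2)) - 216*A^2*B^2 < 0 := by
  nlinarith [mul_pos hσ h9σ, mul_nonneg hM (mul_pos hσ h9σ).le, mul_pos (mul_pos hA hB) (mul_pos hA hB)]

lemma sumsq3 (x y z : ℝ) (h : x^2 + y^2 + z^2 = 0) : x = 0 := by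
  have h1 : x^2 ≤ 0 := by nlinarith [sq_nonneg y, sq_nonneg z]
  have h2 : x^2 = 0 := le_antisymm h1 (sq_nonneg x)
  exact pow_eq_zero_iff (n := 2) (by norm_num) |>.mp h2

lemma pig (u v l : ℝ) (hl : 0 < l) (hu : u = 0) (hv : v = 0) (h : l^2 = u^2 + v^2) : False := by
  subst hu; subst hv
  simp only [ne_eq, OfNat.ofNat_ne_zero, not_false_eq_true, zero_pow, add_zero] at h
  exact absurd h (pow_pos hl 2).ne'

lemma master (A B x1 y1 x2 y2 x3 y3 l1 l2 l3 J δ s : ℝ)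
    (hB : 0 < B) (hBA : B < A)
    (hl1 : 0 < l1) (hl2 : 0 < l2) (hl3 : 0 < l3) (hJ : J < 0)
    (hE1 : B*x1^2 + A*y1^2 = A*B) (hE2 : B*x2^2 + A*y2^2 = A*B) (hE3 : B*x3^2 + A*y3^2 = A*B)
    (hd1 : l1^2 = (x2-x3)^2 + (y2-y3)^2)
    (hd2 : l2^2 = (x1-x3)^2 + (y1-y3)^2)
    (hd3 : l3^2 = (x1-x2)^2 + (y1-y2)^2)
    (hm1 : B*x2*x3 + A*y2*y3 = A*B*(1 + l1*J))
    (hm2 : B*x1*x3 + A*y1*y3 = A*B*(1 + l2*J))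
    (hm3 : B*x1*x2 + A*y1*y2 = A*B*(1 + l3*J))
    (hX1 : ((x2-x1)*l2 + (x3-x1)*l3) * (A*y1) = ((y2-y1)*l2 + (y3-y1)*l3) * (B*x1))
    (hX2 : ((x3-x2)*l3 + (x1-x2)*l1) * (A*y2) = ((y3-y2)*l3 + (y1-y2)*l1) * (B*x2))
    (hX3 : ((x1-x3)*l1 + (x2-x3)*l2) * (A*y3) = ((y1-y3)*l1 + (y2-y3)*l2) * (B*x3))
    (hδ : δ^2 = A^2 - A*B + B^2) (hδ0 : 0 ≤ δ)
    (hs : s^2 = 2*δ - A - B) (hs0 : 0 ≤ s) :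
    l1 + l2 + l3 = 2*(δ + A + B)*s/(A - B) := by
  have hA : 0 < A := lt_trans hB hBA
  have hL : 0 < l1 + l2 + l3 := by linarith
  -- vertex 1 : u = P2-P1 (lu=l3), w = P3-P1 (lw=l2), lo = l1
  obtain ⟨hT1, hEqa1, hW1⟩ := vertexW A B x1 y1 (x2-x1) (y2-y1) (x3-x1) (y3-y1) l3 l2 l1 J
    hB hA hl3 hl2 hJ
    (by linear_combination hd3) (by linear_combination hd2)
    (by linear_combination hd1 - hd2 - hd3) hE1 hX1
    (by linear_combination hm3 - hE1) (by linear_combination hm2 - hE1)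
    (by linear_combination hE1 + hE2 - 2*hm3) (by linear_combination hE1 + hE3 - 2*hm2)
    (by linear_combination hm1 - hm2 - hm3 + hE1)
  -- vertex 2 : u = P3-P2 (lu=l1), w = P1-P2 (lw=l3), lo = l2
  obtain ⟨hT2, hEqa2, hW2⟩ := vertexW A B x2 y2 (x3-x2) (y3-y2) (x1-x2) (y1-y2) l1 l3 l2 J
    hB hA hl1 hl3 hJ
    (by linear_combination hd1) (by linear_combination hd3)
    (by linear_combination hd2 - hd1 - hd3) hE2 hX2
    (by linear_combination hm1 - hE2) (by linear_combination hm3 - hE2)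
    (by linear_combination hE2 + hE3 - 2*hm1) (by linear_combination hE2 + hE1 - 2*hm3)
    (by linear_combination hm2 - hm1 - hm3 + hE2)
  -- vertex 3 : u = P1-P3 (lu=l2), w = P2-P3 (lw=l1), lo = l3
  obtain ⟨hT3, hEqa3, hW3⟩ := vertexW A B x3 y3 (x1-x3) (y1-y3) (x2-x3) (y2-y3) l2 l1 l3 J
    hB hA hl2 hl1 hJ
    (by linear_combination hd2) (by linear_combination hd1)
    (by linear_combination hd3 - hd1 - hd2) hE3 hX3
    (by linear_combination hm2 - hE3) (by linear_combination hm1 - hE3)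
    (by linear_combination hE3 + hE1 - 2*hm2) (by linear_combination hE3 + hE2 - 2*hm1)
    (by linear_combination hm3 - hm2 - hm1 + hE3)
  -- determinant is nonzero
  have hdet : A^2*B^2*(x1*y2 - x2*y1 + x2*y3 - x3*y2 + x3*y1 - x1*y3)^2
      = -2*A^3*B^3*J^3*(l1*l2*l3) := by
    linear_combination (y3^2*A^2*B + (-2)*y2*y3*A^2*B + y2^2*A^2*B + (-2)*x2*x3*A*B^2 + (2)*x2*y2*x3*y3*A*B + (2)*x2^2*x3^2*B^2)*hE1 + (y3^2*A^2*B + (2)*x3^2*A*B^2 + (-2)*y1*y3*A^2*B + y1^2*A^2*B + (-2)*y1^2*x3^2*A*B + (-2)*x1*x3*A*B^2 + (2)*x1*y1*x3*y3*A*B)*hE2 + ((2)*A^2*B^2 + (-1)*y2^2*A^2*B + (-2)*y1*y2*A^2*B + (-1)*y1^2*A^2*B + (2)*y1^2*y2^2*A^2 + (-2)*x1*x2*A*B^2 + (2)*x1*y1*x2*y2*A*B)*hE3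
      - (2*(B*x1*x3 + A*y1*y3 - A*B)*(B*x2*x3 + A*y2*y3 - A*B))*hm3
      - (2*(A*B*l3*J)*(B*x2*x3 + A*y2*y3 - A*B))*hm2
      - (2*(A*B*l3*J)*(A*B*l2*J))*hm1
  have hnJ : 0 < -J := by linarith
  have hD : (x1*y2 - x2*y1 + x2*y3 - x3*y2 + x3*y1 - x1*y3) ≠ 0 := by
    intro h
    rw [h] at hdet
    have h1 : 0 < 2*A^3*B^3*(l1*l2*l3)*(-J)^3 :=
      mul_pos (by positivity) (pow_pos hnJ 3)
    have h3 : 2*A^3*B^3*(l1*l2*l3)*(-J)^3 = -2*A^3*B^3*J^3*(l1*l2*l3) := by ring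
    have h4 : A^2*B^2*(0:ℝ)^2 = 0 := by ring
    linarith [hdet, h1, h3, h4]
  -- the three linear equations
  have heq1 : (B*x1)*(l1*(l1+l2+l3-2*l1)*x1 + l2*(l1+l2+l3-2*l2)*x2 + l3*(l1+l2+l3-2*l3)*x3)
      + (A*y1)*(l1*(l1+l2+l3-2*l1)*y1 + l2*(l1+l2+l3-2*l2)*y2 + l3*(l1+l2+l3-2*l3)*y3)
      = A*B*(l1*(l1+l2+l3-2*l1) + l2*(l1+l2+l3-2*l2) + l3*(l1+l2+l3-2*l3) + 2*(l1*l2*l3)*J) := by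
    linear_combination (l1*(l1+l2+l3-2*l1))*hE1 + (l2*(l1+l2+l3-2*l2))*hm3 + (l3*(l1+l2+l3-2*l3))*hm2
  have heq2 : (B*x2)*(l1*(l1+l2+l3-2*l1)*x1 + l2*(l1+l2+l3-2*l2)*x2 + l3*(l1+l2+l3-2*l3)*x3)
      + (A*y2)*(l1*(l1+l2+l3-2*l1)*y1 + l2*(l1+l2+l3-2*l2)*y2 + l3*(l1+l2+l3-2*l3)*y3)
      = A*B*(l1*(l1+l2+l3-2*l1) + l2*(l1+l2+l3-2*l2) + l3*(l1+l2+l3-2*l3) + 2*(l1*l2*l3)*J) := by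
    linear_combination (l2*(l1+l2+l3-2*l2))*hE2 + (l1*(l1+l2+l3-2*l1))*hm3 + (l3*(l1+l2+l3-2*l3))*hm1
  have heq3 : (B*x3)*(l1*(l1+l2+l3-2*l1)*x1 + l2*(l1+l2+l3-2*l2)*x2 + l3*(l1+l2+l3-2*l3)*x3)
      + (A*y3)*(l1*(l1+l2+l3-2*l1)*y1 + l2*(l1+l2+l3-2*l2)*y2 + l3*(l1+l2+l3-2*l3)*y3)
      = A*B*(l1*(l1+l2+l3-2*l1) + l2*(l1+l2+l3-2*l2) + l3*(l1+l2+l3-2*l3) + 2*(l1*l2*l3)*J) := by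
    linear_combination (l3*(l1+l2+l3-2*l3))*hE3 + (l1*(l1+l2+l3-2*l1))*hm2 + (l2*(l1+l2+l3-2*l2))*hm1
  have hw1 : (l1*(l1+l2+l3-2*l1)*x1 + l2*(l1+l2+l3-2*l2)*x2 + l3*(l1+l2+l3-2*l3)*x3) = 0 := by
    have h : (B*(x1*y2 - x2*y1 + x2*y3 - x3*y2 + x3*y1 - x1*y3))
        * (l1*(l1+l2+l3-2*l1)*x1 + l2*(l1+l2+l3-2*l2)*x2 + l3*(l1+l2+l3-2*l3)*x3) = 0 := by
      linear_combination (y2-y3)*heq1 + (y3-y1)*heq2 + (y1-y2)*heq3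
    exact (mul_eq_zero.mp h).resolve_left (mul_ne_zero hB.ne' hD)
  have hw2 : (l1*(l1+l2+l3-2*l1)*y1 + l2*(l1+l2+l3-2*l2)*y2 + l3*(l1+l2+l3-2*l3)*y3) = 0 := by
    have h : (A*(x1*y2 - x2*y1 + x2*y3 - x3*y2 + x3*y1 - x1*y3))
        * (l1*(l1+l2+l3-2*l1)*y1 + l2*(l1+l2+l3-2*l2)*y2 + l3*(l1+l2+l3-2*l3)*y3) = 0 := by
      linear_combination (x3-x2)*heq1 + (x1-x3)*heq2 + (x2-x1)*heq3
    exact (mul_eq_zero.mp h).resolve_left (mul_ne_zero hA.ne' hD)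
  have hR1 : l1*(l1+l2+l3-2*l1) + l2*(l1+l2+l3-2*l2) + l3*(l1+l2+l3-2*l3) + 2*(l1*l2*l3)*J = 0 := by
    have h : A*B*(l1*(l1+l2+l3-2*l1) + l2*(l1+l2+l3-2*l2) + l3*(l1+l2+l3-2*l3) + 2*(l1*l2*l3)*J) = 0 := by
      linear_combination (B*x1)*hw1 + (A*y1)*hw2 - heq1
    exact (mul_eq_zero.mp h).resolve_left (by positivity)
  -- key symmetric identities
  have hkey1 : 3*(4*A*B*J^3 - (l1+l2+l3)^2*J - 4*(l1+l2+l3))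
      + J*((l1+l2+l3)^2 + 4*(A+B)*(l1+l2+l3)*J + 12*A*B*J^2) = 0 := by
    have h : (2*(l1*l2*l3)^2*(l1+l2+l3)) * (3*(4*A*B*J^3 - (l1+l2+l3)^2*J - 4*(l1+l2+l3))
        + J*((l1+l2+l3)^2 + 4*(A+B)*(l1+l2+l3)*J + 12*A*B*J^2)) = 0 := by
      linear_combination ((-2)*l1*l2*l3^4 + (-6)*l1*l2^2*l3^3 + (-6)*l1*l2^3*l3^2 + (-2)*l1*l2^4*l3 + (-6)*l1^2*l2*l3^3 + (-12)*l1^2*l2^2*l3^2 + (-6)*l1^2*l2^3*l3 + (-6)*l1^3*l2*l3^2 + (-6)*l1^3*l2^2*l3 + (-2)*l1^4*l2*l3)*hR1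
        - (2*(l1*l2*l3)*l1)*hW1 - (2*(l1*l2*l3)*l2)*hW2 - (2*(l1*l2*l3)*l3)*hW3
    exact (mul_eq_zero.mp h).resolve_left (by positivity)
  have hkey2 : (l1+l2+l3)^2*(4*A*B*J^3 - (l1+l2+l3)^2*J - 4*(l1+l2+l3))
      = 2*(l1*l2*l3)*J^2*((l1+l2+l3)^2 + 4*(A+B)*(l1+l2+l3)*J + 12*A*B*J^2) := by
    have h : (16*(l1*l2*l3)^5) * ((l1+l2+l3)^2*(4*A*B*J^3 - (l1+l2+l3)^2*J - 4*(l1+l2+l3))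
        - 2*(l1*l2*l3)*J^2*((l1+l2+l3)^2 + 4*(A+B)*(l1+l2+l3)*J + 12*A*B*J^2)) = 0 := by
      linear_combination ((-16)*l1^4*l2^4*l3^8 + (-32)*l1^4*l2^5*l3^7 + (-32)*l1^4*l2^6*l3^6 + (-32)*l1^4*l2^7*l3^5 + (-16)*l1^4*l2^8*l3^4 + (-32)*l1^5*l2^4*l3^7 + (-192)*l1^5*l2^5*l3^5*J^3*A*B + (-32)*l1^5*l2^5*l3^6 + (-64)*l1^5*l2^5*l3^6*J^2*B + (-64)*l1^5*l2^5*l3^6*J^2*A + (-16)*l1^5*l2^5*l3^7*J + (-32)*l1^5*l2^6*l3^5 + (-64)*l1^5*l2^6*l3^5*J^2*B + (-64)*l1^5*l2^6*l3^5*J^2*A + (-32)*l1^5*l2^6*l3^6*J + (-32)*l1^5*l2^7*l3^4 + (-16)*l1^5*l2^7*l3^5*J + (-32)*l1^6*l2^4*l3^6 + (-32)*l1^6*l2^5*l3^5 + (-64)*l1^6*l2^5*l3^5*J^2*B + (-64)*l1^6*l2^5*l3^5*J^2*A + (-32)*l1^6*l2^5*l3^6*J + (-32)*l1^6*l2^6*l3^4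 + (-32)*l1^6*l2^6*l3^5*J + (-32)*l1^7*l2^4*l3^5 + (-32)*l1^7*l2^5*l3^4 + (-16)*l1^7*l2^5*l3^5*J + (-16)*l1^8*l2^4*l3^4)*hR1
        - (16*(l1*l2*l3)^4*l1^2)*hW1 - (16*(l1*l2*l3)^4*l2^2)*hW2 - (16*(l1*l2*l3)^4*l3^2)*hW3
    have h2 := (mul_eq_zero.mp h).resolve_left (by positivity)
    linarith [h2]
  -- dichotomy on G2
  by_cases hG2 : (l1+l2+l3)^2 + 4*(A+B)*(l1+l2+l3)*J + 12*A*B*J^2 = 0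
  · -- main case : G1 = 0 and G2 = 0
    have hG1 : 4*A*B*J^3 - (l1+l2+l3)^2*J - 4*(l1+l2+l3) = 0 := by
      have h3 : 3*(4*A*B*J^3 - (l1+l2+l3)^2*J - 4*(l1+l2+l3)) = 0 := by
        linear_combination hkey1 - J*hG2
      linarith [h3]
    obtain ⟨hδpos, hδlt, habs1, habs2⟩ := sqrt_facts A B δ hB hBA hδ hδ0
    have hquad : (6*A*B*J + (A+B)*(l1+l2+l3))^2 = ((l1+l2+l3)*δ)^2 := by
      linear_combination 3*A*B*hG2 - (l1+l2+l3)^2*hδ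
    have hfac : (6*A*B*J + (A+B)*(l1+l2+l3) - (l1+l2+l3)*δ)
        * (6*A*B*J + (A+B)*(l1+l2+l3) + (l1+l2+l3)*δ) = 0 := by
      linear_combination hquad
    rcases mul_eq_zero.mp hfac with hc|hc
    · -- genuine branch : 6ABJ = (δ-A-B)L
      have htau : 0 < A+B-δ := by linarith
      have h9τ : 0 < 9*A*B - (A+B-δ)^2 := by
        have hrw : 9*A*B - (A+B-δ)^2 = 2*((A+B)*δ - (A^2+B^2-4*A*B)) - (δ^2 - (A^2-A*B+B^2)) := by ring
        have h0 : δ^2 - (A^2-A*B+B^2) = 0 := by rw [hδ]; ring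
        rw [hrw, h0]; linarith [habs1]
      have hbr : 4*A*B*(l1+l2+l3)*((l1+l2+l3)^2*((A+B-δ)*(9*A*B-(A+B-δ)^2)) - 216*A^2*B^2) = 0 := by
        linear_combination 216*A^3*B^3*hG1
          - (144*A^3*B^3*J^2 - 24*A^2*B^2*(A+B-δ)*(l1+l2+l3)*J
             + (4*A*B*(A+B-δ)^2 - 36*A^2*B^2)*(l1+l2+l3)^2)*hc
      have hbracket : (l1+l2+l3)^2*((A+B-δ)*(9*A*B-(A+B-δ)^2)) = 216*A^2*B^2 := by
        have h := (mul_eq_zero.mp hbr).resolve_left (by positivity)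
        linarith
      have hABpos : 0 < A - B := by linarith
      rw [eq_div_iff hABpos.ne']
      have hiden : (2*(δ+A+B)*s)^2 * ((A+B-δ)*(9*A*B-(A+B-δ)^2)) = 216*A^2*B^2*(A-B)^2 := by
        linear_combination ((-4)*B^5 + (16)*A*B^4 + (68)*A^2*B^3 + (68)*A^3*B^2 + (16)*A^4*B - (4)*A^5 + (4)*δ*B^4 + (52)*δ*A*B^3 + (96)*δ*A^2*B^2 + (52)*δ*A^3*B + (4)*δ*A^4 + (8)*δ^2*B^3 - (12)*δ^2*A*B^2 - (12)*δ^2*A^2*B + (8)*δ^2*A^3 - (8)*δ^3*B^2 - (52)*δ^3*A*B - (8)*δ^3*A^2 - (4)*δ^4*B - (4)*δ^4*A + (4)*δ^5)*hs + ((-4)*B^4 + (8)*A*B^3 + (312)*A^2*B^2 + (8)*A^3*B - (4)*A^4 + (12)*δ*B^3 + (36)*δ*A*B^2 + (36)*δ*A^2*B + (12)*δ*A^3 - (4)*δ^2*B^2 - (104)*δ^2*A*B - (4)*δ^2*A^2 - (12)*δ^3*B - (12)*δ^3*A + (8)*δ^4)*hδ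
      have hKpos : 0 < (A+B-δ)*(9*A*B-(A+B-δ)^2) := mul_pos htau h9τ
      have hsq2 : ((l1+l2+l3)*(A-B))^2 = (2*(δ+A+B)*s)^2 := by
        apply mul_right_cancel₀ hKpos.ne'
        linear_combination ((A-B)^2)*hbracket - hiden
      have hfac2 : ((l1+l2+l3)*(A-B) - 2*(δ+A+B)*s)*((l1+l2+l3)*(A-B) + 2*(δ+A+B)*s) = 0 := by
        linear_combination hsq2
      have h2σs : 0 ≤ 2*(δ+A+B)*s := mul_nonneg (by linarith) hs0
      have hLAB : 0 < (l1+l2+l3)*(A-B) := mul_pos hL hABpos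
      rcases mul_eq_zero.mp hfac2 with h|h
      · linarith
      · exfalso; linarith
    · -- spurious branch : contradiction
      exfalso
      have h9σ : 0 < (A+B+δ)^2 - 9*A*B := by
        have hrw : (A+B+δ)^2 - 9*A*B = 2*((A+B)*δ - (4*A*B-A^2-B^2)) + (δ^2 - (A^2-A*B+B^2)) := by ring
        have h0 : δ^2 - (A^2-A*B+B^2) = 0 := by rw [hδ]; ring
        rw [hrw, h0]; linarith [habs2]
      have hbr2 : 4*A*B*(l1+l2+l3)*((l1+l2+l3)^2*((A+B+δ)*(9*A*B-(A+B+δ)^2)) - 216*A^2*B^2) = 0 := by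
        linear_combination 216*A^3*B^3*hG1
          - (144*A^3*B^3*J^2 - 24*A^2*B^2*(A+B+δ)*(l1+l2+l3)*J
             + (4*A*B*(A+B+δ)^2 - 36*A^2*B^2)*(l1+l2+l3)^2)*hc
      have hneg : (l1+l2+l3)^2*((A+B+δ)*(9*A*B-(A+B+δ)^2)) - 216*A^2*B^2 < 0 :=
        negfact A B δ ((l1+l2+l3)^2) hB hA (by linarith) h9σ (by positivity)
      have hpos4 : 0 < 4*A*B*(l1+l2+l3) := by positivity
      have hX := (mul_eq_zero.mp hbr2).resolve_left hpos4.ne'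
      linarith [hneg, hX]
  · -- degenerate case : equilateral, impossible
    exfalso
    have hprod : J*((l1+l2+l3)^2 + 4*(A+B)*(l1+l2+l3)*J + 12*A*B*J^2)
        * ((l1+l2+l3)^2 + 6*(l1*l2*l3)*J) = 0 := by
      linear_combination (l1+l2+l3)^2*hkey1 - 3*hkey2
    have hL2 : (l1+l2+l3)^2 + 6*(l1*l2*l3)*J = 0 := by
      rcases mul_eq_zero.mp hprod with h|h
      · rcases mul_eq_zero.mp h with h'|h'
        · exact absurd h' hJ.ne
        · exact absurd h' hG2
      · exact h
    have he : (l1-l2)^2 + (l1-l3)^2 + (l2-l3)^2 = 0 := by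
      linear_combination (-3/2 : ℝ)*hR1 + (1/2 : ℝ)*hL2
    have hl12 : l2 = l1 := by
      have := sumsq3 (l1-l2) (l1-l3) (l2-l3) he
      linarith
    have hl13 : l3 = l1 := by
      have := sumsq3 (l1-l3) (l2-l3) (l1-l2) (by linear_combination he)
      linarith
    rw [hl12, hl13] at hL2 hW1 hEqa1 hEqa2 hEqa3
    rw [hl13] at hd3
    rw [hl12] at hd2
    have hl1sq : 0 < l1^2 := by positivity
    have hJv : 2*l1*J = -3 := by
      have h : 3*l1^2*(3 + 2*l1*J) = 0 := by linear_combination hL2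
      have h2 := (mul_eq_zero.mp h).resolve_left (by positivity)
      linarith
    have hJv2 : 4*l1^2*J^2 = 9 := by linear_combination (2*l1*J - 3)*hJv
    have hquart : (l1^2 - 3*A)*(l1^2 - 3*B) = 0 := by
      linear_combination (1/9 : ℝ)*hW1
        - ((-12*A*B*l1^2*J^2 + 18*A*B*l1*J - 6*(A+B)*l1^3*J + 9*(A+B)*l1^2 - 27*A*B)/9)*hJv
    rcases mul_eq_zero.mp hquart with hA3|hB3
    · -- l1^2 = 3A : all points have y = 0
      have hA3' : l1^2 = 3*A := by linarith [sub_eq_zero.mp hA3]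
      have hy : ∀ x y : ℝ, B*x^2 + A*y^2 = A*B →
          ((B*x)^2 + (A*y)^2) * ((l1+l1)^2 - l1^2) = 4*A^2*B^2*J^2*(l1*l1) → y = 0 := by
        intro x y hE hEqa
        have hρ : 3*l1^2*((B*x)^2 + (A*y)^2 - A*B^2) = 0 := by
          linear_combination hEqa + (A^2*B^2)*hJv2 - (3*A*B^2)*hA3'
        have hρ2 : (B*x)^2 + (A*y)^2 - A*B^2 = 0 :=
          (mul_eq_zero.mp hρ).resolve_left (by positivity)
        have hy2 : A*(A-B)*y^2 = 0 := by linear_combination hρ2 - B*hE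
        have hAB' : A*(A-B) ≠ 0 := by
          have : 0 < A - B := by linarith
          positivity
        have hy3 : y^2 = 0 := (mul_eq_zero.mp hy2).resolve_left hAB'
        exact pow_eq_zero_iff (n := 2) (by norm_num) |>.mp hy3
      have hy1 : y1 = 0 := hy x1 y1 hE1 (by linear_combination hEqa1)
      have hy2 : y2 = 0 := hy x2 y2 hE2 (by linear_combination hEqa2)
      have hy3 : y3 = 0 := hy x3 y3 hE3 (by linear_combination hEqa3)
      have hx1 : x1^2 = A := by
        apply mul_left_cancel₀ hB.ne'; rw [hy1] at hE1; linear_combination hE1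
      have hx2 : x2^2 = A := by
        apply mul_left_cancel₀ hB.ne'; rw [hy2] at hE2; linear_combination hE2
      have hx3 : x3^2 = A := by
        apply mul_left_cancel₀ hB.ne'; rw [hy3] at hE3; linear_combination hE3
      rcases mul_eq_zero.mp (show (x1-x2)*(x1+x2) = 0 by linear_combination hx1 - hx2) with h12|h12
      · exact pig (x1-x2) (y1-y2) l1 hl1 h12 (by rw [hy1, hy2]; ring) hd3
      · rcases mul_eq_zero.mp (show (x1-x3)*(x1+x3) = 0 by linear_combination hx1 - hx3) with h13|h13
        · exact pig (x1-x3) (y1-y3) l1 hl1 h13 (by rw [hy1, hy3]; ring) hd2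
        · have h23 : x2 - x3 = 0 := by linarith
          exact pig (x2-x3) (y2-y3) l1 hl1 h23 (by rw [hy2, hy3]; ring) hd1
    · -- l1^2 = 3B : all points have x = 0
      have hB3' : l1^2 = 3*B := by linarith [sub_eq_zero.mp hB3]
      have hx : ∀ x y : ℝ, B*x^2 + A*y^2 = A*B →
          ((B*x)^2 + (A*y)^2) * ((l1+l1)^2 - l1^2) = 4*A^2*B^2*J^2*(l1*l1) → x = 0 := by
        intro x y hE hEqa
        have hρ : 3*l1^2*((B*x)^2 + (A*y)^2 - A^2*B) = 0 := by
          linear_combination hEqa + (A^2*B^2)*hJv2 - (3*A^2*B)*hB3'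
        have hρ2 : (B*x)^2 + (A*y)^2 - A^2*B = 0 :=
          (mul_eq_zero.mp hρ).resolve_left (by positivity)
        have hx2 : B*(A-B)*x^2 = 0 := by linear_combination A*hE - hρ2
        have hAB' : B*(A-B) ≠ 0 := by
          have : 0 < A - B := by linarith
          positivity
        have hx3 : x^2 = 0 := (mul_eq_zero.mp hx2).resolve_left hAB'
        exact pow_eq_zero_iff (n := 2) (by norm_num) |>.mp hx3
      have hx1 : x1 = 0 := hx x1 y1 hE1 (by linear_combination hEqa1)
      have hx2 : x2 = 0 := hx x2 y2 hE2 (by linear_combination hEqa2)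
      have hx3 : x3 = 0 := hx x3 y3 hE3 (by linear_combination hEqa3)
      have hy1 : y1^2 = B := by
        apply mul_left_cancel₀ hA.ne'; rw [hx1] at hE1; linear_combination hE1
      have hy2 : y2^2 = B := by
        apply mul_left_cancel₀ hA.ne'; rw [hx2] at hE2; linear_combination hE2
      have hy3 : y3^2 = B := by
        apply mul_left_cancel₀ hA.ne'; rw [hx3] at hE3; linear_combination hE3
      rcases mul_eq_zero.mp (show (y1-y2)*(y1+y2) = 0 by linear_combination hy1 - hy2) with h12|h12
      · exact pig (x1-x2) (y1-y2) l1 hl1 (by rw [hx1, hx2]; ring) h12 hd3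
      · rcases mul_eq_zero.mp (show (y1-y3)*(y1+y3) = 0 by linear_combination hy1 - hy3) with h13|h13
        · exact pig (x1-x3) (y1-y3) l1 hl1 (by rw [hx1, hx3]; ring) h13 hd2
        · have h23 : y2 - y3 = 0 := by linarith
          exact pig (x2-x3) (y2-y3) l1 hl1 (by rw [hx2, hx3]; ring) h23 hd1

lemma chordpos (A B u0 u1 l : ℝ) (hB : 0 < B) (hBA : B < A) (hl : 0 < l)
    (hd : l^2 = u0^2 + u1^2) : 0 < B*u0^2 + A*u1^2 := by
  nlinarith [mul_pos hB (mul_pos hl hl), sq_nonneg u0, sq_nonneg u1]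

/-- All 3-periodic orbits have the same perimeter. -/
theorem perimeter_invariant (a b : ℝ) (hb : 0 < b) (hab : b < a)
    (P₁ P₂ P₃ : Pt) (h : IsOrbit a b P₁ P₂ P₃) :
    ‖P₂ - P₁‖ + ‖P₃ - P₂‖ + ‖P₁ - P₃‖ =
      2 * (Real.sqrt (a ^ 4 - a ^ 2 * b ^ 2 + b ^ 4) + a ^ 2 + b ^ 2) *
        Real.sqrt (2 * Real.sqrt (a ^ 4 - a ^ 2 * b ^ 2 + b ^ 4) - a ^ 2 - b ^ 2) /
        (a ^ 2 - b ^ 2) := by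
  obtain ⟨h12, h23, h13, hE1o, hE2o, hE3o, hr1, hr2, hr3⟩ := h
  have ha : (0:ℝ) < a := lt_trans hb hab
  have ha0 : (a:ℝ) ≠ 0 := ha.ne'
  have hb0 : (b:ℝ) ≠ 0 := hb.ne'
  have hA : (0:ℝ) < a^2 := by positivity
  have hB : (0:ℝ) < b^2 := by positivity
  have hBA : b^2 < a^2 := by nlinarith only [hb, hab, ha, mul_pos (sub_pos.mpr hab) ha]
  have hl3 : 0 < ‖P₂ - P₁‖ := by rw [norm_pos_iff]; exact sub_ne_zero.mpr h12.symm
  have hl1 : 0 < ‖P₃ - P₂‖ := by rw [norm_pos_iff]; exact sub_ne_zero.mpr h23.symm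
  have hl2 : 0 < ‖P₁ - P₃‖ := by rw [norm_pos_iff]; exact sub_ne_zero.mpr h13
  have hd3 : ‖P₂ - P₁‖^2 = (P₁ 0 - P₂ 0)^2 + (P₁ 1 - P₂ 1)^2 := by
    rw [norm_sq_eq]; simp only [PiLp.sub_apply]; try ring
  have hd1 : ‖P₃ - P₂‖^2 = (P₂ 0 - P₃ 0)^2 + (P₂ 1 - P₃ 1)^2 := by
    rw [norm_sq_eq]; simp only [PiLp.sub_apply]; try ring
  have hd2 : ‖P₁ - P₃‖^2 = (P₁ 0 - P₃ 0)^2 + (P₁ 1 - P₃ 1)^2 := by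
    rw [norm_sq_eq]; simp only [PiLp.sub_apply]; try ring
  have hE1 : b^2*(P₁ 0)^2 + a^2*(P₁ 1)^2 = a^2*b^2 := by
    unfold onEllipse at hE1o; field_simp at hE1o; linear_combination hE1o
  have hE2 : b^2*(P₂ 0)^2 + a^2*(P₂ 1)^2 = a^2*b^2 := by
    unfold onEllipse at hE2o; field_simp at hE2o; linear_combination hE2o
  have hE3 : b^2*(P₃ 0)^2 + a^2*(P₃ 1)^2 = a^2*b^2 := by
    unfold onEllipse at hE3o; field_simp at hE3o; linear_combination hE3o
  unfold reflects at hr1 hr2 hr3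
  simp only [PiLp.add_apply, PiLp.smul_apply, PiLp.sub_apply, smul_eq_mul] at hr1 hr2 hr3
  rw [norm_sub_rev P₃ P₁] at hr1
  rw [norm_sub_rev P₁ P₂] at hr2
  rw [norm_sub_rev P₂ P₃] at hr3
  field_simp at hr1 hr2 hr3
  have hX1 : ((P₂ 0 - P₁ 0)*‖P₁ - P₃‖ + (P₃ 0 - P₁ 0)*‖P₂ - P₁‖) * (a^2*(P₁ 1))
      = ((P₂ 1 - P₁ 1)*‖P₁ - P₃‖ + (P₃ 1 - P₁ 1)*‖P₂ - P₁‖) * (b^2*(P₁ 0)) := by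
    apply mul_left_cancel₀ (mul_pos hl3 hl2).ne'
    linear_combination -(‖P₂ - P₁‖ * ‖P₁ - P₃‖) * hr1
  have hX2 : ((P₃ 0 - P₂ 0)*‖P₂ - P₁‖ + (P₁ 0 - P₂ 0)*‖P₃ - P₂‖) * (a^2*(P₂ 1))
      = ((P₃ 1 - P₂ 1)*‖P₂ - P₁‖ + (P₁ 1 - P₂ 1)*‖P₃ - P₂‖) * (b^2*(P₂ 0)) := by
    apply mul_left_cancel₀ (mul_pos hl1 hl3).ne'
    linear_combination -(‖P₃ - P₂‖ * ‖P₂ - P₁‖) * hr2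
  have hX3 : ((P₁ 0 - P₃ 0)*‖P₃ - P₂‖ + (P₂ 0 - P₃ 0)*‖P₁ - P₃‖) * (a^2*(P₃ 1))
      = ((P₁ 1 - P₃ 1)*‖P₃ - P₂‖ + (P₂ 1 - P₃ 1)*‖P₁ - P₃‖) * (b^2*(P₃ 0)) := by
    apply mul_left_cancel₀ (mul_pos hl2 hl1).ne'
    linear_combination -(‖P₁ - P₃‖ * ‖P₃ - P₂‖) * hr3
  -- chord inequalities
  have h12pos := chordpos (a^2) (b^2) (P₂ 0 - P₁ 0) (P₂ 1 - P₁ 1) ‖P₂ - P₁‖ hB hBA hl3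
    (by linear_combination hd3)
  have h13pos := chordpos (a^2) (b^2) (P₃ 0 - P₁ 0) (P₃ 1 - P₁ 1) ‖P₁ - P₃‖ hB hBA hl2
    (by linear_combination hd2)
  have h23pos := chordpos (a^2) (b^2) (P₃ 0 - P₂ 0) (P₃ 1 - P₂ 1) ‖P₃ - P₂‖ hB hBA hl1
    (by linear_combination hd1)
  have hid12 : b^2*(P₂ 0 - P₁ 0)^2 + a^2*(P₂ 1 - P₁ 1)^2
      = 2*(a^2*b^2) - 2*(b^2*(P₁ 0)*(P₂ 0) + a^2*(P₁ 1)*(P₂ 1)) := by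
    linear_combination hE1 + hE2
  have hid13 : b^2*(P₃ 0 - P₁ 0)^2 + a^2*(P₃ 1 - P₁ 1)^2
      = 2*(a^2*b^2) - 2*(b^2*(P₁ 0)*(P₃ 0) + a^2*(P₁ 1)*(P₃ 1)) := by
    linear_combination hE1 + hE3
  have hid23 : b^2*(P₃ 0 - P₂ 0)^2 + a^2*(P₃ 1 - P₂ 1)^2
      = 2*(a^2*b^2) - 2*(b^2*(P₂ 0)*(P₃ 0) + a^2*(P₂ 1)*(P₃ 1)) := by
    linear_combination hE2 + hE3
  have hm12lt : b^2*(P₁ 0)*(P₂ 0) + a^2*(P₁ 1)*(P₂ 1) < a^2*b^2 := by linarith only [h12pos, hid12]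
  have hm13lt : b^2*(P₁ 0)*(P₃ 0) + a^2*(P₁ 1)*(P₃ 1) < a^2*b^2 := by linarith only [h13pos, hid13]
  have hm23lt : b^2*(P₂ 0)*(P₃ 0) + a^2*(P₂ 1)*(P₃ 1) < a^2*b^2 := by linarith only [h23pos, hid23]
  have hdu1 : (P₂ 0 - P₁ 0)*(b^2*(P₁ 0)) + (P₂ 1 - P₁ 1)*(a^2*(P₁ 1)) < 0 := by
    have hq : (P₂ 0 - P₁ 0)*(b^2*(P₁ 0)) + (P₂ 1 - P₁ 1)*(a^2*(P₁ 1))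
        = (b^2*(P₁ 0)*(P₂ 0) + a^2*(P₁ 1)*(P₂ 1)) - a^2*b^2 := by linear_combination -hE1
    linarith only [hq, hm12lt]
  have hdw1 : (P₃ 0 - P₁ 0)*(b^2*(P₁ 0)) + (P₃ 1 - P₁ 1)*(a^2*(P₁ 1)) < 0 := by
    have hq : (P₃ 0 - P₁ 0)*(b^2*(P₁ 0)) + (P₃ 1 - P₁ 1)*(a^2*(P₁ 1))
        = (b^2*(P₁ 0)*(P₃ 0) + a^2*(P₁ 1)*(P₃ 1)) - a^2*b^2 := by linear_combination -hE1
    linarith only [hq, hm13lt]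
  have hdu2 : (P₃ 0 - P₂ 0)*(b^2*(P₂ 0)) + (P₃ 1 - P₂ 1)*(a^2*(P₂ 1)) < 0 := by
    have hq : (P₃ 0 - P₂ 0)*(b^2*(P₂ 0)) + (P₃ 1 - P₂ 1)*(a^2*(P₂ 1))
        = (b^2*(P₂ 0)*(P₃ 0) + a^2*(P₂ 1)*(P₃ 1)) - a^2*b^2 := by linear_combination -hE2
    linarith only [hq, hm23lt]
  have hdw2 : (P₁ 0 - P₂ 0)*(b^2*(P₂ 0)) + (P₁ 1 - P₂ 1)*(a^2*(P₂ 1)) < 0 := by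
    have hq : (P₁ 0 - P₂ 0)*(b^2*(P₂ 0)) + (P₁ 1 - P₂ 1)*(a^2*(P₂ 1))
        = (b^2*(P₁ 0)*(P₂ 0) + a^2*(P₁ 1)*(P₂ 1)) - a^2*b^2 := by linear_combination -hE2
    linarith only [hq, hm12lt]
  have hJeq1 := vertexJ (b^2*(P₁ 0)) (a^2*(P₁ 1)) (P₂ 0 - P₁ 0) (P₂ 1 - P₁ 1)
    (P₃ 0 - P₁ 0) (P₃ 1 - P₁ 1) ‖P₂ - P₁‖ ‖P₁ - P₃‖ hl3 hl2
    (by linear_combination hd3) (by linear_combination hd2) hX1 hdu1 hdw1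
  have hJeq2 := vertexJ (b^2*(P₂ 0)) (a^2*(P₂ 1)) (P₃ 0 - P₂ 0) (P₃ 1 - P₂ 1)
    (P₁ 0 - P₂ 0) (P₁ 1 - P₂ 1) ‖P₃ - P₂‖ ‖P₂ - P₁‖ hl1 hl3
    (by linear_combination hd1) (by linear_combination hd3) hX2 hdu2 hdw2
  set J : ℝ := (b^2*(P₁ 0)*(P₂ 0) + a^2*(P₁ 1)*(P₂ 1) - a^2*b^2)/(a^2*b^2*‖P₂ - P₁‖) with hJdef
  have hJ : J < 0 := div_neg_of_neg_of_pos (by linarith only [hm12lt])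
    (mul_pos (show (0:ℝ) < a^2*b^2 by positivity) hl3)
  have hM12 : b^2*(P₁ 0)*(P₂ 0) + a^2*(P₁ 1)*(P₂ 1) - a^2*b^2 = a^2*b^2*‖P₂ - P₁‖*J := by
    rw [hJdef]; field_simp
  have hm3 : b^2*(P₁ 0)*(P₂ 0) + a^2*(P₁ 1)*(P₂ 1) = a^2*b^2*(1 + ‖P₂ - P₁‖*J) := by
    linear_combination hM12
  have h13e : (b^2*(P₁ 0)*(P₃ 0) + a^2*(P₁ 1)*(P₃ 1) - a^2*b^2)*‖P₂ - P₁‖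
      = (b^2*(P₁ 0)*(P₂ 0) + a^2*(P₁ 1)*(P₂ 1) - a^2*b^2)*‖P₁ - P₃‖ := by
    linear_combination -hJeq1 - (‖P₁ - P₃‖ - ‖P₂ - P₁‖)*hE1
  have hm2 : b^2*(P₁ 0)*(P₃ 0) + a^2*(P₁ 1)*(P₃ 1) = a^2*b^2*(1 + ‖P₁ - P₃‖*J) := by
    apply mul_right_cancel₀ hl3.ne'
    linear_combination h13e + ‖P₁ - P₃‖*hM12
  have h23e : (b^2*(P₂ 0)*(P₃ 0) + a^2*(P₂ 1)*(P₃ 1) - a^2*b^2)*‖P₂ - P₁‖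
      = (b^2*(P₁ 0)*(P₂ 0) + a^2*(P₁ 1)*(P₂ 1) - a^2*b^2)*‖P₃ - P₂‖ := by
    linear_combination hJeq2 + (‖P₂ - P₁‖ - ‖P₃ - P₂‖)*hE2
  have hm1 : b^2*(P₂ 0)*(P₃ 0) + a^2*(P₂ 1)*(P₃ 1) = a^2*b^2*(1 + ‖P₃ - P₂‖*J) := by
    apply mul_right_cancel₀ hl3.ne'
    linear_combination h23e + ‖P₃ - P₂‖*hM12
  have h0δ : 0 ≤ a^4 - a^2*b^2 + b^4 := by nlinarith only [sq_nonneg (a^2 - b^2), sq_nonneg (a*b)]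
  set δ := Real.sqrt (a^4 - a^2*b^2 + b^4) with hδdef
  have hδ0 : 0 ≤ δ := Real.sqrt_nonneg _
  have hδ : δ^2 = (a^2)^2 - a^2*b^2 + (b^2)^2 := by
    rw [hδdef, Real.sq_sqrt h0δ]; ring
  have hR0 : 0 ≤ 2*δ - a^2 - b^2 := by
    nlinarith only [hδ, hδ0, sq_nonneg (a^2 - b^2), pow_pos ha 2, pow_pos hb 2]
  set s := Real.sqrt (2*δ - a^2 - b^2) with hsdef
  have hs : s^2 = 2*δ - a^2 - b^2 := by rw [hsdef]; exact Real.sq_sqrt hR0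
  have hs0 : 0 ≤ s := Real.sqrt_nonneg _
  have hmain := master (a^2) (b^2) (P₁ 0) (P₁ 1) (P₂ 0) (P₂ 1) (P₃ 0) (P₃ 1)
    ‖P₃ - P₂‖ ‖P₁ - P₃‖ ‖P₂ - P₁‖ J δ s hB hBA hl1 hl2 hl3 hJ hE1 hE2 hE3
    hd1 hd2 hd3 hm1 hm2 hm3 hX1 hX2 hX3 hδ hδ0 hs hs0
  linarith only [hmain]
end
end

section
/- For every 3-periodic billiard orbit P₁P₂P₃ in the ellipse E, each side line of the orbit is tangent to the confocal caustic ellipse with semiaxes a_c = a(δ − b²)/c² and b_c = b(a² − δ)/c²: for the line through P₂ and P₃ (and cyclically for the other two sides), every point p = (pₓ, p_y) on that line satisfies pₓ²/a_c² + p_y²/b_c² ≥ 1, with equality for exactly one point of the line. -/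
noncomputable section

open EuclideanGeometry Real

set_option maxHeartbeats 1000000

def T2e (a b l u v : ℝ) : ℝ :=
  (a^2*b^2 - l*a^2)*(u^2+v^2) - l*b^2*(1+u^2*v^2) + 2*(l*b^2 - l*a^2 - a^2*b^2)*(u*v)

lemma quad_vieta (A Bq Cq s1 s3 : ℝ) (h1 : A*s1^2 + Bq*s1 + Cq = 0)
    (h3 : A*s3^2 + Bq*s3 + Cq = 0) (hne : s1 ≠ s3) :
    A*(s1+s3) + Bq = 0 ∧ A*(s1*s3) - Cq = 0 := by
  have h0 : (s1 - s3) * (A*(s1+s3) + Bq) = 0 := by linear_combination h1 - h3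
  have hg1 : A*(s1+s3) + Bq = 0 :=
    (mul_eq_zero.mp h0).resolve_left (sub_ne_zero.mpr hne)
  exact ⟨hg1, by linear_combination s1 * hg1 - h1⟩

lemma key_R (a b l s1 s2 s3 : ℝ)
    (h12 : T2e a b l s1 s2 = 0) (h23 : T2e a b l s2 s3 = 0) (h31 : T2e a b l s3 s1 = 0)
    (h13 : s1 ≠ s3) :
    l * ((a^2-b^2)^2*l^2 + 2*a^2*b^2*(a^2+b^2)*l - 3*a^4*b^4)
      * (b^2*(1-s2^2)^2 + 4*a^2*s2^2) = 0 := by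
  simp only [T2e] at h12 h23 h31
  have hA1 : (a^2*b^2 - l*a^2 - l*b^2*s2^2)*s1^2 + (2*s2*(l*b^2 - l*a^2 - a^2*b^2))*s1
      + (s2^2*(a^2*b^2 - l*a^2) - l*b^2) = 0 := by linear_combination h12
  have hA3 : (a^2*b^2 - l*a^2 - l*b^2*s2^2)*s3^2 + (2*s2*(l*b^2 - l*a^2 - a^2*b^2))*s3
      + (s2^2*(a^2*b^2 - l*a^2) - l*b^2) = 0 := by linear_combination h23
  obtain ⟨hg1, hg2⟩ := quad_vieta _ _ _ _ _ hA1 hA3 h13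
  linear_combination (-((a^2*b^2 - l*a^2 - l*b^2*s2^2)^2)) * h31
    + (-((a^2*b^2 - l*a^2) * ((2*s2*(l*b^2 - l*a^2 - a^2*b^2))
        - (a^2*b^2 - l*a^2 - l*b^2*s2^2)*(s1+s3)))) * hg1
    + (-(2*(a^2*b^2 - l*a^2)*(a^2*b^2 - l*a^2 - l*b^2*s2^2)
        + (l*b^2)*((s2^2*(a^2*b^2 - l*a^2) - l*b^2)
          + (a^2*b^2 - l*a^2 - l*b^2*s2^2)*(s1*s3))
        - 2*(l*b^2 - l*a^2 - a^2*b^2)*(a^2*b^2 - l*a^2 - l*b^2*s2^2))) * hg2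

lemma aux_param (a b x y : ℝ) (ha : 0 < a) (hb : 0 < b) (hx : x ≠ -a)
    (e : b^2*x^2 + a^2*y^2 = a^2*b^2) :
    ∃ s : ℝ, x = a*(1-s^2)/(1+s^2) ∧ y = 2*b*s/(1+s^2) := by
  have hax : a + x ≠ 0 := fun h => hx (by linarith)
  obtain ⟨s, hsdef⟩ : ∃ s : ℝ, s = a*y/(b*(a+x)) := ⟨_, rfl⟩
  have hs : b*(a+x)*s = a*y := by rw [hsdef]; field_simp
  have hq : (a+x)*s^2 = a - x := by
    have h2 : (b^2*(a+x))*((a+x)*s^2) = (b^2*(a+x))*(a-x) := by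
      have hss : (b*(a+x)*s)^2 = (a*y)^2 := by rw [hs]
      linear_combination hss + e
    exact mul_left_cancel₀ (mul_ne_zero (pow_ne_zero 2 hb.ne') hax) h2
  have hden : (1:ℝ) + s^2 ≠ 0 := by positivity
  have hy0 : y = b*(a+x)*s/a := by field_simp; linear_combination -hs
  refine ⟨s, ?_, ?_⟩
  · field_simp
    linear_combination hq
  · rw [hy0]
    field_simp
    linear_combination s*hq

lemma aux_Spos (a b s : ℝ) (ha : 0 < a) (hb : 0 < b) : 0 < b^2*(1-s^2)^2 + 4*a^2*s^2 := by
  rcases eq_or_ne s 0 with h | h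
  · rw [h]; nlinarith [pow_pos hb 2]
  · have h2 : 0 < s^2 := lt_of_le_of_ne (sq_nonneg s) (Ne.symm (pow_ne_zero 2 h))
    nlinarith [mul_nonneg (sq_nonneg b) (sq_nonneg (1-s^2)), mul_pos (pow_pos ha 2) h2]
lemma key0 (a b l x1 y1 x2 y2 x3 y3 : ℝ) (ha : 0 < a) (hb : 0 < b)
    (e1 : b^2*x1^2 + a^2*y1^2 = a^2*b^2)
    (e2 : b^2*x2^2 + a^2*y2^2 = a^2*b^2)
    (e3 : b^2*x3^2 + a^2*y3^2 = a^2*b^2)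
    (d12 : ¬(x1 = x2 ∧ y1 = y2)) (d23 : ¬(x2 = x3 ∧ y2 = y3)) (d13 : ¬(x1 = x3 ∧ y1 = y3))
    (hx1 : x1 ≠ -a) (hx2 : x2 ≠ -a) (hx3 : x3 ≠ -a)
    (ct12 : (a^2-l)*(y2-y1)^2 + (b^2-l)*(x2-x1)^2 = (x1*(y2-y1) - y1*(x2-x1))^2)
    (ct23 : (a^2-l)*(y3-y2)^2 + (b^2-l)*(x3-x2)^2 = (x2*(y3-y2) - y2*(x3-x2))^2)
    (ct31 : (a^2-l)*(y1-y3)^2 + (b^2-l)*(x1-x3)^2 = (x3*(y1-y3) - y3*(x1-x3))^2) :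
    l * ((a^2-b^2)^2*l^2 + 2*a^2*b^2*(a^2+b^2)*l - 3*a^4*b^4) = 0 := by
  obtain ⟨s1, hx1f, hy1f⟩ := aux_param a b x1 y1 ha hb hx1 e1
  obtain ⟨s2, hx2f, hy2f⟩ := aux_param a b x2 y2 ha hb hx2 e2
  obtain ⟨s3, hx3f, hy3f⟩ := aux_param a b x3 y3 ha hb hx3 e3
  have hd1 : (1:ℝ) + s1^2 ≠ 0 := by positivity
  have hd2 : (1:ℝ) + s2^2 ≠ 0 := by positivity
  have hd3 : (1:ℝ) + s3^2 ≠ 0 := by positivity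
  have hne12 : s1 ≠ s2 := by
    intro hq; exact d12 ⟨by rw [hx1f, hx2f, hq], by rw [hy1f, hy2f, hq]⟩
  have hne23 : s2 ≠ s3 := by
    intro hq; exact d23 ⟨by rw [hx2f, hx3f, hq], by rw [hy2f, hy3f, hq]⟩
  have hne13 : s1 ≠ s3 := by
    intro hq; exact d13 ⟨by rw [hx1f, hx3f, hq], by rw [hy1f, hy3f, hq]⟩
  have key12 : ((a^2-l)*(y2-y1)^2 + (b^2-l)*(x2-x1)^2 - (x1*(y2-y1) - y1*(x2-x1))^2)
      * ((1+s1^2)^2*(1+s2^2)^2) = (4*(s1-s2)^2) * T2e a b l s1 s2 := by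
    rw [hx1f, hy1f, hx2f, hy2f]; simp only [T2e]; field_simp; ring
  have hT12 : T2e a b l s1 s2 = 0 := by
    have h0 : (4*(s1-s2)^2) * T2e a b l s1 s2 = 0 := by
      rw [← key12]; linear_combination ((1+s1^2)^2*(1+s2^2)^2) * ct12
    exact (mul_eq_zero.mp h0).resolve_left
      (mul_ne_zero (by norm_num) (pow_ne_zero 2 (sub_ne_zero.mpr hne12)))
  have key23 : ((a^2-l)*(y3-y2)^2 + (b^2-l)*(x3-x2)^2 - (x2*(y3-y2) - y2*(x3-x2))^2)
      * ((1+s2^2)^2*(1+s3^2)^2) = (4*(s2-s3)^2) * T2e a b l s2 s3 := by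
    rw [hx2f, hy2f, hx3f, hy3f]; simp only [T2e]; field_simp; ring
  have key31 : ((a^2-l)*(y1-y3)^2 + (b^2-l)*(x1-x3)^2 - (x3*(y1-y3) - y3*(x1-x3))^2)
      * ((1+s3^2)^2*(1+s1^2)^2) = (4*(s3-s1)^2) * T2e a b l s3 s1 := by
    rw [hx3f, hy3f, hx1f, hy1f]; simp only [T2e]; field_simp; ring
  have hT23 : T2e a b l s2 s3 = 0 := by
    have h0 : (4*(s2-s3)^2) * T2e a b l s2 s3 = 0 := by
      rw [← key23]; linear_combination ((1+s2^2)^2*(1+s3^2)^2) * ct23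
    exact (mul_eq_zero.mp h0).resolve_left
      (mul_ne_zero (by norm_num) (pow_ne_zero 2 (sub_ne_zero.mpr hne23)))
  have hT31 : T2e a b l s3 s1 = 0 := by
    have h0 : (4*(s3-s1)^2) * T2e a b l s3 s1 = 0 := by
      rw [← key31]; linear_combination ((1+s3^2)^2*(1+s1^2)^2) * ct31
    exact (mul_eq_zero.mp h0).resolve_left
      (mul_ne_zero (by norm_num) (pow_ne_zero 2 (sub_ne_zero.mpr (fun hq => hne13 hq.symm))))
  have hR := key_R a b l s1 s2 s3 hT12 hT23 hT31 hne13
  have hSpos : 0 < b^2*(1-s2^2)^2 + 4*a^2*s2^2 := aux_Spos a b s2 ha hb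
  exact (mul_eq_zero.mp hR).resolve_right hSpos.ne'

lemma aux_y0 (a b x y : ℝ) (ha : 0 < a) (hxa : x = -a ∨ x = a)
    (e : b^2*x^2 + a^2*y^2 = a^2*b^2) : y = 0 := by
  have h0 : a^2*y^2 = 0 := by
    rcases hxa with h | h <;> (rw [h] at e; linear_combination e)
  rcases mul_eq_zero.mp h0 with h | h
  · exact absurd h (pow_ne_zero 2 ha.ne')
  · exact pow_eq_zero_iff two_ne_zero |>.mp h

lemma aux_xpm (a b x y : ℝ) (ha : 0 < a) (hb : 0 < b) (hy : y = 0)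
    (e : b^2*x^2 + a^2*y^2 = a^2*b^2) : x = a ∨ x = -a := by
  have h0 : b^2*((x-a)*(x+a)) = 0 := by rw [hy] at e; linear_combination e
  have h1 := (mul_eq_zero.mp h0).resolve_left (pow_ne_zero 2 hb.ne')
  rcases mul_eq_zero.mp h1 with h | h
  · left; linarith
  · right; linarith

lemma keyAux (a b l x1 y1 x2 y2 x3 y3 : ℝ) (ha : 0 < a) (hb : 0 < b)
    (e1 : b^2*x1^2 + a^2*y1^2 = a^2*b^2)
    (e2 : b^2*x2^2 + a^2*y2^2 = a^2*b^2)
    (e3 : b^2*x3^2 + a^2*y3^2 = a^2*b^2)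
    (d12 : ¬(x1 = x2 ∧ y1 = y2)) (d23 : ¬(x2 = x3 ∧ y2 = y3)) (d13 : ¬(x1 = x3 ∧ y1 = y3))
    (ct12 : (a^2-l)*(y2-y1)^2 + (b^2-l)*(x2-x1)^2 = (x1*(y2-y1) - y1*(x2-x1))^2)
    (ct23 : (a^2-l)*(y3-y2)^2 + (b^2-l)*(x3-x2)^2 = (x2*(y3-y2) - y2*(x3-x2))^2)
    (ct31 : (a^2-l)*(y1-y3)^2 + (b^2-l)*(x1-x3)^2 = (x3*(y1-y3) - y3*(x1-x3))^2)
    (hbad : x1 = -a) :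
    l * ((a^2-b^2)^2*l^2 + 2*a^2*b^2*(a^2+b^2)*l - 3*a^4*b^4) = 0 := by
  have hy1 : y1 = 0 := aux_y0 a b x1 y1 ha (Or.inl hbad) e1
  by_cases h2a : x2 = a
  · have hy2 : y2 = 0 := aux_y0 a b x2 y2 ha (Or.inr h2a) e2
    have hlb : l = b^2 := by
      have h1 : (b^2 - l)*(2*a)^2 = 0 := by
        rw [hbad, hy1, h2a, hy2] at ct12; linear_combination ct12
      have h2 := (mul_eq_zero.mp h1).resolve_right (by positivity)
      linarith
    have hy3 : y3 = 0 := by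
      have h3 : b^2*y3^2 = 0 := by
        rw [h2a, hy2, hlb] at ct23; linear_combination -ct23
      have h4 := (mul_eq_zero.mp h3).resolve_left (pow_ne_zero 2 hb.ne')
      exact pow_eq_zero_iff two_ne_zero |>.mp h4
    rcases aux_xpm a b x3 y3 ha hb hy3 e3 with h | h
    · exact absurd ⟨h2a.trans h.symm, hy2.trans hy3.symm⟩ d23
    · exact absurd ⟨hbad.trans h.symm, hy1.trans hy3.symm⟩ d13
  · by_cases h3a : x3 = a
    · have hy3 : y3 = 0 := aux_y0 a b x3 y3 ha (Or.inr h3a) e3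
      have hlb : l = b^2 := by
        have h1 : (b^2 - l)*(2*a)^2 = 0 := by
          rw [hbad, hy1, h3a, hy3] at ct31; linear_combination ct31
        have h2 := (mul_eq_zero.mp h1).resolve_right (by positivity)
        linarith
      have ct23' : (a^2-l)*(y3-y2)^2 + (b^2-l)*(x3-x2)^2
          = (x3*(y3-y2) - y3*(x3-x2))^2 := by linear_combination ct23
      have hy2 : y2 = 0 := by
        have h3 : b^2*y2^2 = 0 := by
          rw [h3a, hy3, hlb] at ct23'; linear_combination -ct23'
        have h4 := (mul_eq_zero.mp h3).resolve_left (pow_ne_zero 2 hb.ne')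
        exact pow_eq_zero_iff two_ne_zero |>.mp h4
      rcases aux_xpm a b x2 y2 ha hb hy2 e2 with h | h
      · exact absurd h h2a
      · exact absurd ⟨hbad.trans h.symm, hy1.trans hy2.symm⟩ d12
    · have hflip := key0 a b l (-x1) y1 (-x2) y2 (-x3) y3 ha hb
        (by linear_combination e1) (by linear_combination e2) (by linear_combination e3)
        (fun ⟨h, h'⟩ => d12 ⟨by linarith, h'⟩)
        (fun ⟨h, h'⟩ => d23 ⟨by linarith, h'⟩)
        (fun ⟨h, h'⟩ => d13 ⟨by linarith, h'⟩)
        (by rw [hbad]; intro hq; simp at hq; linarith)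
        (fun hq => h2a (by linarith))
        (fun hq => h3a (by linarith))
        (by linear_combination ct12) (by linear_combination ct23) (by linear_combination ct31)
      exact hflip

lemma keyP (a b l x1 y1 x2 y2 x3 y3 : ℝ) (ha : 0 < a) (hb : 0 < b)
    (e1 : b^2*x1^2 + a^2*y1^2 = a^2*b^2)
    (e2 : b^2*x2^2 + a^2*y2^2 = a^2*b^2)
    (e3 : b^2*x3^2 + a^2*y3^2 = a^2*b^2)
    (d12 : ¬(x1 = x2 ∧ y1 = y2)) (d23 : ¬(x2 = x3 ∧ y2 = y3)) (d13 : ¬(x1 = x3 ∧ y1 = y3))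
    (ct12 : (a^2-l)*(y2-y1)^2 + (b^2-l)*(x2-x1)^2 = (x1*(y2-y1) - y1*(x2-x1))^2)
    (ct23 : (a^2-l)*(y3-y2)^2 + (b^2-l)*(x3-x2)^2 = (x2*(y3-y2) - y2*(x3-x2))^2)
    (ct31 : (a^2-l)*(y1-y3)^2 + (b^2-l)*(x1-x3)^2 = (x3*(y1-y3) - y3*(x1-x3))^2) :
    l * ((a^2-b^2)^2*l^2 + 2*a^2*b^2*(a^2+b^2)*l - 3*a^4*b^4) = 0 := by
  by_cases h1 : x1 = -a
  · exact keyAux a b l x1 y1 x2 y2 x3 y3 ha hb e1 e2 e3 d12 d23 d13 ct12 ct23 ct31 h1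
  by_cases h2 : x2 = -a
  · exact keyAux a b l x2 y2 x3 y3 x1 y1 ha hb e2 e3 e1
      d23 (fun ⟨h, h'⟩ => d13 ⟨h.symm, h'.symm⟩) (fun ⟨h, h'⟩ => d12 ⟨h.symm, h'.symm⟩)
      ct23 ct31 ct12 h2
  by_cases h3 : x3 = -a
  · exact keyAux a b l x3 y3 x1 y1 x2 y2 ha hb e3 e1 e2
      (fun ⟨h, h'⟩ => d13 ⟨h.symm, h'.symm⟩) d12 (fun ⟨h, h'⟩ => d23 ⟨h.symm, h'.symm⟩)
      ct31 ct12 ct23 h3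
  · exact key0 a b l x1 y1 x2 y2 x3 y3 ha hb e1 e2 e3 d12 d23 d13 h1 h2 h3 ct12 ct23 ct31

lemma aux_sq_sum_pos {x1 y1 x2 y2 : ℝ} (h : ¬(x1 = x2 ∧ y1 = y2)) :
    0 < (x2-x1)^2 + (y2-y1)^2 := by
  rcases not_and_or.mp h with h | h
  · have hx : x2 - x1 ≠ 0 := fun hq => h (by linarith)
    nlinarith [lt_of_le_of_ne (sq_nonneg (x2-x1)) (Ne.symm (pow_ne_zero 2 hx)), sq_nonneg (y2-y1)]
  · have hy : y2 - y1 ≠ 0 := fun hq => h (by linarith)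
    nlinarith [lt_of_le_of_ne (sq_nonneg (y2-y1)) (Ne.symm (pow_ne_zero 2 hy)), sq_nonneg (x2-x1)]

lemma convexN (a b x1 y1 x2 y2 : ℝ) (ha : 0 < a) (hb : 0 < b)
    (e1 : b^2*x1^2 + a^2*y1^2 = a^2*b^2) (e2 : b^2*x2^2 + a^2*y2^2 = a^2*b^2)
    (d : ¬(x1 = x2 ∧ y1 = y2)) :
    b^2*x1*(x2-x1) + a^2*y1*(y2-y1) ≠ 0 := by
  intro h0
  have hkey : (b*x1 - b*x2)^2 + (a*y1 - a*y2)^2 = 0 := by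
    linear_combination e2 - e1 - 2*h0
  have hx : b*(x1 - x2) = 0 := by nlinarith [sq_nonneg (b*x1 - b*x2), sq_nonneg (a*y1 - a*y2)]
  have hy : a*(y1 - y2) = 0 := by nlinarith [sq_nonneg (b*x1 - b*x2), sq_nonneg (a*y1 - a*y2)]
  refine d ⟨?_, ?_⟩
  · have := (mul_eq_zero.mp hx).resolve_left hb.ne'; linarith
  · have := (mul_eq_zero.mp hy).resolve_left ha.ne'; linarith

lemma mainCoord (a b x1 y1 x2 y2 x3 y3 : ℝ) (ha : 0 < a) (hb : 0 < b)
    (e1 : b^2*x1^2 + a^2*y1^2 = a^2*b^2)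
    (e2 : b^2*x2^2 + a^2*y2^2 = a^2*b^2)
    (e3 : b^2*x3^2 + a^2*y3^2 = a^2*b^2)
    (d12 : ¬(x1 = x2 ∧ y1 = y2)) (d23 : ¬(x2 = x3 ∧ y2 = y3)) (d13 : ¬(x1 = x3 ∧ y1 = y3))
    (sr2 : ((x1-x2)^2+(y1-y2)^2) * (b^2*x2*(y3-y2) - a^2*y2*(x3-x2))^2
         = ((x3-x2)^2+(y3-y2)^2) * (b^2*x2*(y1-y2) - a^2*y2*(x1-x2))^2)
    (sr3 : ((x2-x3)^2+(y2-y3)^2) * (b^2*x3*(y1-y3) - a^2*y3*(x1-x3))^2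
         = ((x1-x3)^2+(y1-y3)^2) * (b^2*x3*(y2-y3) - a^2*y3*(x2-x3))^2) :
    ∃ l : ℝ, 0 < l ∧
      l * ((a^2-b^2)^2*l^2 + 2*a^2*b^2*(a^2+b^2)*l - 3*a^4*b^4) = 0 ∧
      ((a^2-l)*(y2-y1)^2 + (b^2-l)*(x2-x1)^2 = (x1*(y2-y1) - y1*(x2-x1))^2) ∧
      ((a^2-l)*(y3-y2)^2 + (b^2-l)*(x3-x2)^2 = (x2*(y3-y2) - y2*(x3-x2))^2) ∧
      ((a^2-l)*(y1-y3)^2 + (b^2-l)*(x1-x3)^2 = (x3*(y1-y3) - y3*(x1-x3))^2) := by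
  have hD12 : 0 < (x2-x1)^2 + (y2-y1)^2 := aux_sq_sum_pos d12
  have hD23 : 0 < (x3-x2)^2 + (y3-y2)^2 := aux_sq_sum_pos d23
  have hD13 : 0 < (x1-x3)^2 + (y1-y3)^2 := aux_sq_sum_pos (fun ⟨h, h'⟩ => d13 ⟨h.symm, h'.symm⟩)
  have hN12 : b^2*x1*(x2-x1) + a^2*y1*(y2-y1) ≠ 0 := convexN a b x1 y1 x2 y2 ha hb e1 e2 d12
  obtain ⟨l, hldef⟩ : ∃ l : ℝ, l = (b^2*x1*(x2-x1) + a^2*y1*(y2-y1))^2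
      / (a^2*b^2*((x2-x1)^2+(y2-y1)^2)) := ⟨_, rfl⟩
  have hl0 : 0 < l := by
    rw [hldef]
    exact div_pos (lt_of_le_of_ne (sq_nonneg _) (Ne.symm (pow_ne_zero 2 hN12)))
      (by positivity)
  have hE12 : l * (a^2*b^2*((x2-x1)^2+(y2-y1)^2)) = (b^2*x1*(x2-x1) + a^2*y1*(y2-y1))^2 := by
    rw [hldef]; field_simp
  -- endpoint symmetry of N along chord 12
  have h21 : b^2*x2*(x1-x2) + a^2*y2*(y1-y2) = b^2*x1*(x2-x1) + a^2*y1*(y2-y1) := by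
    linear_combination e1 - e2
  -- reflection transfer at vertex 2
  have htr2 : (b^2*x2*(x1-x2) + a^2*y2*(y1-y2))^2 * ((x3-x2)^2+(y3-y2)^2)
      = (b^2*x2*(x3-x2) + a^2*y2*(y3-y2))^2 * ((x1-x2)^2+(y1-y2)^2) := by
    linear_combination sr2
  have hE23' : (l * (a^2*b^2*((x3-x2)^2+(y3-y2)^2))) * ((x2-x1)^2+(y2-y1)^2)
      = ((b^2*x2*(x3-x2) + a^2*y2*(y3-y2))^2) * ((x2-x1)^2+(y2-y1)^2) := by
    calc (l * (a^2*b^2*((x3-x2)^2+(y3-y2)^2))) * ((x2-x1)^2+(y2-y1)^2)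
        = (l * (a^2*b^2*((x2-x1)^2+(y2-y1)^2))) * ((x3-x2)^2+(y3-y2)^2) := by ring
      _ = (b^2*x1*(x2-x1) + a^2*y1*(y2-y1))^2 * ((x3-x2)^2+(y3-y2)^2) := by rw [hE12]
      _ = (b^2*x2*(x1-x2) + a^2*y2*(y1-y2))^2 * ((x3-x2)^2+(y3-y2)^2) := by rw [h21]
      _ = (b^2*x2*(x3-x2) + a^2*y2*(y3-y2))^2 * ((x1-x2)^2+(y1-y2)^2) := htr2
      _ = ((b^2*x2*(x3-x2) + a^2*y2*(y3-y2))^2) * ((x2-x1)^2+(y2-y1)^2) := by ring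
  have hE23 : l * (a^2*b^2*((x3-x2)^2+(y3-y2)^2)) = (b^2*x2*(x3-x2) + a^2*y2*(y3-y2))^2 :=
    mul_right_cancel₀ hD12.ne' hE23'
  have h32 : b^2*x3*(x2-x3) + a^2*y3*(y2-y3) = b^2*x2*(x3-x2) + a^2*y2*(y3-y2) := by
    linear_combination e2 - e3
  have htr3 : (b^2*x3*(x2-x3) + a^2*y3*(y2-y3))^2 * ((x1-x3)^2+(y1-y3)^2)
      = (b^2*x3*(x1-x3) + a^2*y3*(y1-y3))^2 * ((x2-x3)^2+(y2-y3)^2) := by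
    linear_combination sr3
  have hE31' : (l * (a^2*b^2*((x1-x3)^2+(y1-y3)^2))) * ((x3-x2)^2+(y3-y2)^2)
      = ((b^2*x3*(x1-x3) + a^2*y3*(y1-y3))^2) * ((x3-x2)^2+(y3-y2)^2) := by
    calc (l * (a^2*b^2*((x1-x3)^2+(y1-y3)^2))) * ((x3-x2)^2+(y3-y2)^2)
        = (l * (a^2*b^2*((x3-x2)^2+(y3-y2)^2))) * ((x1-x3)^2+(y1-y3)^2) := by ring
      _ = (b^2*x2*(x3-x2) + a^2*y2*(y3-y2))^2 * ((x1-x3)^2+(y1-y3)^2) := by rw [hE23]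
      _ = (b^2*x3*(x2-x3) + a^2*y3*(y2-y3))^2 * ((x1-x3)^2+(y1-y3)^2) := by rw [h32]
      _ = (b^2*x3*(x1-x3) + a^2*y3*(y1-y3))^2 * ((x2-x3)^2+(y2-y3)^2) := htr3
      _ = ((b^2*x3*(x1-x3) + a^2*y3*(y1-y3))^2) * ((x3-x2)^2+(y3-y2)^2) := by ring
  have hE31 : l * (a^2*b^2*((x1-x3)^2+(y1-y3)^2)) = (b^2*x3*(x1-x3) + a^2*y3*(y1-y3))^2 :=
    mul_right_cancel₀ hD23.ne' hE31'
  have hab2 : (a^2*b^2 : ℝ) ≠ 0 := by positivity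
  have ct12 : (a^2-l)*(y2-y1)^2 + (b^2-l)*(x2-x1)^2 = (x1*(y2-y1) - y1*(x2-x1))^2 := by
    have h7 : a^2*b^2*((a^2-l)*(y2-y1)^2 + (b^2-l)*(x2-x1)^2)
        = a^2*b^2*((x1*(y2-y1) - y1*(x2-x1))^2) := by
      linear_combination -hE12 - (b^2*(x2-x1)^2 + a^2*(y2-y1)^2)*e1
    exact mul_left_cancel₀ hab2 h7
  have ct23 : (a^2-l)*(y3-y2)^2 + (b^2-l)*(x3-x2)^2 = (x2*(y3-y2) - y2*(x3-x2))^2 := by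
    have h7 : a^2*b^2*((a^2-l)*(y3-y2)^2 + (b^2-l)*(x3-x2)^2)
        = a^2*b^2*((x2*(y3-y2) - y2*(x3-x2))^2) := by
      linear_combination -hE23 - (b^2*(x3-x2)^2 + a^2*(y3-y2)^2)*e2
    exact mul_left_cancel₀ hab2 h7
  have ct31 : (a^2-l)*(y1-y3)^2 + (b^2-l)*(x1-x3)^2 = (x3*(y1-y3) - y3*(x1-x3))^2 := by
    have h7 : a^2*b^2*((a^2-l)*(y1-y3)^2 + (b^2-l)*(x1-x3)^2)
        = a^2*b^2*((x3*(y1-y3) - y3*(x1-x3))^2) := by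
      linear_combination -hE31 - (b^2*(x1-x3)^2 + a^2*(y1-y3)^2)*e3
    exact mul_left_cancel₀ hab2 h7
  exact ⟨l, hl0, keyP a b l x1 y1 x2 y2 x3 y3 ha hb e1 e2 e3 d12 d23 d13 ct12 ct23 ct31,
    ct12, ct23, ct31⟩

lemma aux_side (A B x y vx vy : ℝ) (hA : 0 < A) (hB : 0 < B) (hv : ¬(vx = 0 ∧ vy = 0))
    (hct : A^2*vy^2 + B^2*vx^2 = (x*vy - y*vx)^2) :
    (∀ t : ℝ, 1 ≤ (x + t*vx)^2/A^2 + (y + t*vy)^2/B^2) ∧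
    (∃! t : ℝ, (x + t*vx)^2/A^2 + (y + t*vy)^2/B^2 = 1) := by
  have hal : 0 < B^2*vx^2 + A^2*vy^2 := by
    rcases not_and_or.mp hv with h | h
    · have h2 : 0 < vx^2 := lt_of_le_of_ne (sq_nonneg vx) (Ne.symm (pow_ne_zero 2 h))
      nlinarith [mul_pos (pow_pos hB 2) h2, mul_nonneg (sq_nonneg A) (sq_nonneg vy)]
    · have h2 : 0 < vy^2 := lt_of_le_of_ne (sq_nonneg vy) (Ne.symm (pow_ne_zero 2 h))
      nlinarith [mul_pos (pow_pos hA 2) h2, mul_nonneg (sq_nonneg B) (sq_nonneg vx)]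
  have key : ∀ t : ℝ, ((x + t*vx)^2*B^2 + (y + t*vy)^2*A^2 - A^2*B^2)*(B^2*vx^2 + A^2*vy^2)
      = ((B^2*vx^2 + A^2*vy^2)*t + (B^2*x*vx + A^2*y*vy))^2 := by
    intro t; linear_combination (-(A^2*B^2))*hct
  have hsplit : ∀ t : ℝ, (x + t*vx)^2/A^2 + (y + t*vy)^2/B^2
      = ((x + t*vx)^2*B^2 + (y + t*vy)^2*A^2)/(A^2*B^2) := by
    intro t; field_simp
  have hnn : ∀ t : ℝ, 0 ≤ (x + t*vx)^2*B^2 + (y + t*vy)^2*A^2 - A^2*B^2 := by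
    intro t
    have h1 : ((x + t*vx)^2*B^2 + (y + t*vy)^2*A^2 - A^2*B^2)
        = ((B^2*vx^2 + A^2*vy^2)*t + (B^2*x*vx + A^2*y*vy))^2/(B^2*vx^2 + A^2*vy^2) := by
      rw [eq_div_iff hal.ne']; exact key t
    rw [h1]; positivity
  have hforall : ∀ t : ℝ, 1 ≤ (x + t*vx)^2/A^2 + (y + t*vy)^2/B^2 := by
    intro t
    rw [hsplit t, le_div_iff₀ (by positivity)]
    nlinarith [hnn t]
  refine ⟨hforall, -(B^2*x*vx + A^2*y*vy)/(B^2*vx^2 + A^2*vy^2), ?_, ?_⟩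
  · dsimp only
    have hz : (B^2*vx^2 + A^2*vy^2)*(-(B^2*x*vx + A^2*y*vy)/(B^2*vx^2 + A^2*vy^2))
        + (B^2*x*vx + A^2*y*vy) = 0 := by field_simp; ring
    have h0 := key (-(B^2*x*vx + A^2*y*vy)/(B^2*vx^2 + A^2*vy^2))
    rw [hz] at h0
    have h0' := h0.trans (by norm_num : ((0:ℝ))^2 = 0)
    have h1 := (mul_eq_zero.mp h0').resolve_right hal.ne'
    rw [hsplit, div_eq_one_iff_eq (by positivity : (A^2*B^2 : ℝ) ≠ 0)]
    linarith [h1]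
  · intro t ht
    rw [hsplit, div_eq_one_iff_eq (by positivity : (A^2*B^2 : ℝ) ≠ 0)] at ht
    have h0 : ((B^2*vx^2 + A^2*vy^2)*t + (B^2*x*vx + A^2*y*vy))^2 = 0 := by
      rw [← key t]; linear_combination (B^2*vx^2 + A^2*vy^2) * ht
    have h1 : (B^2*vx^2 + A^2*vy^2)*t + (B^2*x*vx + A^2*y*vy) = 0 :=
      pow_eq_zero_iff two_ne_zero |>.mp h0
    field_simp
    linarith [h1]

lemma aux_norm_sq (v : Pt) : ‖v‖ ^ 2 = (v 0)^2 + (v 1)^2 := by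
  rw [EuclideanSpace.norm_eq, Real.sq_sqrt (by positivity)]
  simp [Fin.sum_univ_two, sq_abs]

lemma aux_ne (P Q : Pt) (h : P ≠ Q) : ¬(P 0 = Q 0 ∧ P 1 = Q 1) := by
  rintro ⟨h0, h1⟩
  exact h (by ext i; fin_cases i <;> assumption)

lemma aux_sr (a b L1 L2 x y u0 u1 w0 w1 : ℝ) (ha : 0 < a) (hb : 0 < b)
    (hL1 : L1 ≠ 0) (hL2 : L2 ≠ 0)
    (hL1sq : L1^2 = w0^2 + w1^2) (hL2sq : L2^2 = u0^2 + u1^2)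
    (h : (L1⁻¹*w0 + L2⁻¹*u0)*(-y/b^2) + (L1⁻¹*w1 + L2⁻¹*u1)*(x/a^2) = 0) :
    (u0^2+u1^2) * (b^2*x*w1 - a^2*y*w0)^2 = (w0^2+w1^2) * (b^2*x*u1 - a^2*y*u0)^2 := by
  have hm0 : L1*L2*(L2*(b^2*x*w1 - a^2*y*w0) + L1*(b^2*x*u1 - a^2*y*u0)) = 0 := by
    field_simp at h
    linear_combination L1*L2*h
  have hm : L2*(b^2*x*w1 - a^2*y*w0) + L1*(b^2*x*u1 - a^2*y*u0) = 0 :=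
    (mul_eq_zero.mp hm0).resolve_left (mul_ne_zero hL1 hL2)
  have heq : L2*(b^2*x*w1 - a^2*y*w0) = -(L1*(b^2*x*u1 - a^2*y*u0)) := by linarith
  have hmsq : (L2*(b^2*x*w1 - a^2*y*w0))^2 = (L1*(b^2*x*u1 - a^2*y*u0))^2 := by
    rw [heq]; ring
  linear_combination hmsq - (b^2*x*w1 - a^2*y*w0)^2 * hL2sq + (b^2*x*u1 - a^2*y*u0)^2 * hL1sq

lemma aux_delta (a b d : ℝ) (hb : 0 < b) (hab : b < a) (hd0 : 0 ≤ d)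
    (hd2 : d^2 = a^4 - a^2*b^2 + b^4) : b^2 < d ∧ d < a^2 ∧ a^2 + b^2 < 2*d := by
  have ha : 0 < a := hb.trans hab
  have hc2 : 0 < a^2 - b^2 := by nlinarith
  have h1 : 0 < d + b^2 := by nlinarith [pow_pos hb 2]
  have h2 : 0 < d + a^2 := by nlinarith [pow_pos ha 2]
  refine ⟨?_, ?_, ?_⟩
  · nlinarith [hd2, h1, mul_pos (mul_pos ha ha) hc2]
  · nlinarith [hd2, h2, mul_pos (mul_pos hb hb) hc2]
  · nlinarith [hd2, hd0, mul_pos hc2 hc2, pow_pos ha 2, pow_pos hb 2]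

lemma aux_vne {p0 p1 q0 q1 : ℝ} (h : ¬(p0 = q0 ∧ p1 = q1)) :
    ¬(q0 - p0 = 0 ∧ q1 - p1 = 0) :=
  fun ⟨h0, h1⟩ => h ⟨by linarith, by linarith⟩

lemma aux_root (a b d l : ℝ) (hb : 0 < b) (hab : b < a) (hd0 : 0 ≤ d)
    (hd2 : d^2 = a^4 - a^2*b^2 + b^4) (h2d : a^2 + b^2 < 2*d) (hl0 : 0 < l)
    (hPl : (a^2-b^2)^2*l^2 + 2*a^2*b^2*(a^2+b^2)*l - 3*a^4*b^4 = 0) :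
    (a*(d - b^2)/(a^2-b^2))^2 = a^2 - l ∧ (b*(a^2 - d)/(a^2-b^2))^2 = b^2 - l := by
  have ha : 0 < a := hb.trans hab
  have hc2 : (0:ℝ) < a^2 - b^2 := by nlinarith
  obtain ⟨ls, hlsdef⟩ : ∃ ls : ℝ, ls = a^2*b^2*(2*d-a^2-b^2)/(a^2-b^2)^2 := ⟨_, rfl⟩
  have hlseq : ls * (a^2-b^2)^2 = a^2*b^2*(2*d-a^2-b^2) := by
    rw [hlsdef]; field_simp
  have hPls : (a^2-b^2)^2*ls^2 + 2*a^2*b^2*(a^2+b^2)*ls - 3*a^4*b^4 = 0 := by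
    have h9 : (a^2-b^2)^2 * ((a^2-b^2)^2*ls^2 + 2*a^2*b^2*(a^2+b^2)*ls - 3*a^4*b^4)
        = (a^2-b^2)^2 * 0 := by
      linear_combination (ls*(a^2-b^2)^2 + a^2*b^2*(2*d-a^2-b^2)
        + 2*a^2*b^2*(a^2+b^2)) * hlseq + 4*a^4*b^4*hd2
    exact mul_left_cancel₀ (by positivity) h9
  have hls0 : 0 ≤ ls := by
    rw [hlsdef]; exact div_nonneg (mul_nonneg (by positivity) (by linarith)) (by positivity)
  have hlls : l = ls := by
    have hfac : ((a^2-b^2)^2*(l + ls) + 2*a^2*b^2*(a^2+b^2)) * (l - ls) = 0 := by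
      linear_combination hPl - hPls
    have hpos : 0 < (a^2-b^2)^2*(l + ls) + 2*a^2*b^2*(a^2+b^2) := by
      have hh1 : 0 ≤ (a^2-b^2)^2*(l+ls) := mul_nonneg (sq_nonneg _) (by linarith)
      have hh2 : 0 < 2*a^2*b^2*(a^2+b^2) := by positivity
      linarith
    have := (mul_eq_zero.mp hfac).resolve_left hpos.ne'
    linarith
  constructor
  · rw [hlls, hlsdef]; field_simp; linear_combination hd2
  · rw [hlls, hlsdef]; field_simp; linear_combination hd2

/-- Each side line of a 3-periodic orbit is tangent to the confocal caustic. -/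
theorem sides_tangent_to_caustic (a b : ℝ) (hb : 0 < b) (hab : b < a)
    (P₁ P₂ P₃ : Pt) (h : IsOrbit a b P₁ P₂ P₃) :
    let δ := Real.sqrt (a ^ 4 - a ^ 2 * b ^ 2 + b ^ 4)
    let ac := a * (δ - b ^ 2) / (a ^ 2 - b ^ 2)
    let bc := b * (a ^ 2 - δ) / (a ^ 2 - b ^ 2)
    let caustic : Pt → ℝ := fun p => (p 0) ^ 2 / ac ^ 2 + (p 1) ^ 2 / bc ^ 2
    ((∀ t : ℝ, 1 ≤ caustic (P₂ + t • (P₃ - P₂))) ∧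
      (∃! t : ℝ, caustic (P₂ + t • (P₃ - P₂)) = 1)) ∧
    ((∀ t : ℝ, 1 ≤ caustic (P₃ + t • (P₁ - P₃))) ∧
      (∃! t : ℝ, caustic (P₃ + t • (P₁ - P₃)) = 1)) ∧
    ((∀ t : ℝ, 1 ≤ caustic (P₁ + t • (P₂ - P₁))) ∧
      (∃! t : ℝ, caustic (P₁ + t • (P₂ - P₁)) = 1)) := by
  intro δ ac bc caustic
  have ha : 0 < a := hb.trans hab
  have hc2 : (0:ℝ) < a^2 - b^2 := by nlinarith
  have hδdef : δ = Real.sqrt (a^4 - a^2*b^2 + b^4) := rfl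
  have hδ2 : δ^2 = a^4 - a^2*b^2 + b^4 := by
    rw [hδdef]; exact Real.sq_sqrt (by nlinarith [sq_nonneg (a^2 - b^2)])
  have hδ0 : (0:ℝ) ≤ δ := by rw [hδdef]; exact Real.sqrt_nonneg _
  obtain ⟨hbδ, hδa, h2δ⟩ := aux_delta a b δ hb hab hδ0 hδ2
  have hacdef : ac = a*(δ - b^2)/(a^2-b^2) := rfl
  have hbcdef : bc = b*(a^2 - δ)/(a^2-b^2) := rfl
  obtain ⟨h12, h23, h13, he1, he2, he3, hr1, hr2, hr3⟩ := h
  simp only [onEllipse] at he1 he2 he3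
  have e1 : b^2*(P₁ 0)^2 + a^2*(P₁ 1)^2 = a^2*b^2 := by
    field_simp [ha.ne', hb.ne'] at he1; linear_combination he1
  have e2 : b^2*(P₂ 0)^2 + a^2*(P₂ 1)^2 = a^2*b^2 := by
    field_simp [ha.ne', hb.ne'] at he2; linear_combination he2
  have e3 : b^2*(P₃ 0)^2 + a^2*(P₃ 1)^2 = a^2*b^2 := by
    field_simp [ha.ne', hb.ne'] at he3; linear_combination he3
  simp only [reflects, PiLp.add_apply, PiLp.smul_apply, PiLp.sub_apply, smul_eq_mul]
    at hr2 hr3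
  have hL32 : ‖P₃ - P₂‖ ≠ 0 := norm_ne_zero_iff.mpr (sub_ne_zero.mpr h23.symm)
  have hL12 : ‖P₁ - P₂‖ ≠ 0 := norm_ne_zero_iff.mpr (sub_ne_zero.mpr h12)
  have hL13 : ‖P₁ - P₃‖ ≠ 0 := norm_ne_zero_iff.mpr (sub_ne_zero.mpr h13)
  have hL23 : ‖P₂ - P₃‖ ≠ 0 := norm_ne_zero_iff.mpr (sub_ne_zero.mpr h23)
  have hL32sq : ‖P₃ - P₂‖^2 = (P₃ 0 - P₂ 0)^2 + (P₃ 1 - P₂ 1)^2 := by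
    rw [aux_norm_sq]; simp [PiLp.sub_apply]
  have hL12sq : ‖P₁ - P₂‖^2 = (P₁ 0 - P₂ 0)^2 + (P₁ 1 - P₂ 1)^2 := by
    rw [aux_norm_sq]; simp [PiLp.sub_apply]
  have hL13sq : ‖P₁ - P₃‖^2 = (P₁ 0 - P₃ 0)^2 + (P₁ 1 - P₃ 1)^2 := by
    rw [aux_norm_sq]; simp [PiLp.sub_apply]
  have hL23sq : ‖P₂ - P₃‖^2 = (P₂ 0 - P₃ 0)^2 + (P₂ 1 - P₃ 1)^2 := by
    rw [aux_norm_sq]; simp [PiLp.sub_apply]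
  have sr2 := aux_sr a b ‖P₃ - P₂‖ ‖P₁ - P₂‖ (P₂ 0) (P₂ 1)
    (P₁ 0 - P₂ 0) (P₁ 1 - P₂ 1) (P₃ 0 - P₂ 0) (P₃ 1 - P₂ 1)
    ha hb hL32 hL12 hL32sq hL12sq (by linear_combination hr2)
  have sr3 := aux_sr a b ‖P₁ - P₃‖ ‖P₂ - P₃‖ (P₃ 0) (P₃ 1)
    (P₂ 0 - P₃ 0) (P₂ 1 - P₃ 1) (P₁ 0 - P₃ 0) (P₁ 1 - P₃ 1)
    ha hb hL13 hL23 hL13sq hL23sq (by linear_combination hr3)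
  obtain ⟨l, hl0, hPl0, ct12, ct23, ct31⟩ :=
    mainCoord a b (P₁ 0) (P₁ 1) (P₂ 0) (P₂ 1) (P₃ 0) (P₃ 1) ha hb e1 e2 e3
      (aux_ne _ _ h12) (aux_ne _ _ h23) (aux_ne _ _ h13) sr2 sr3
  have hPl : (a^2-b^2)^2*l^2 + 2*a^2*b^2*(a^2+b^2)*l - 3*a^4*b^4 = 0 :=
    (mul_eq_zero.mp hPl0).resolve_left hl0.ne'
  obtain ⟨hra, hrb⟩ := aux_root a b δ l hb hab hδ0 hδ2 h2δ hl0 hPl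
  have hacsq : ac^2 = a^2 - l := by rw [hacdef]; exact hra
  have hbcsq : bc^2 = b^2 - l := by rw [hbcdef]; exact hrb
  have hac0 : 0 < ac := by
    rw [hacdef]; exact div_pos (mul_pos ha (by linarith)) hc2
  have hbc0 : 0 < bc := by
    rw [hbcdef]; exact div_pos (mul_pos hb (by linarith)) hc2
  have hceq : ∀ (P Q : Pt) (t : ℝ), caustic (P + t • (Q - P))
      = (P 0 + t*(Q 0 - P 0))^2/ac^2 + (P 1 + t*(Q 1 - P 1))^2/bc^2 := by
    intro P Q t
    show ((P + t • (Q - P)) 0)^2/ac^2 + ((P + t • (Q - P)) 1)^2/bc^2 = _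
    simp [PiLp.add_apply, PiLp.smul_apply, PiLp.sub_apply]
  have hS1 := aux_side ac bc (P₂ 0) (P₂ 1) (P₃ 0 - P₂ 0) (P₃ 1 - P₂ 1) hac0 hbc0
    (aux_vne (aux_ne _ _ h23))
    (by rw [hacsq, hbcsq]; exact ct23)
  have hS2 := aux_side ac bc (P₃ 0) (P₃ 1) (P₁ 0 - P₃ 0) (P₁ 1 - P₃ 1) hac0 hbc0
    (aux_vne (aux_ne _ _ h13.symm))
    (by rw [hacsq, hbcsq]; exact ct31)
  have hS3 := aux_side ac bc (P₁ 0) (P₁ 1) (P₂ 0 - P₁ 0) (P₂ 1 - P₁ 1) hac0 hbc0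
    (aux_vne (aux_ne _ _ h12))
    (by rw [hacsq, hbcsq]; exact ct12)
  refine ⟨⟨fun t => ?_, ?_⟩, ⟨fun t => ?_, ?_⟩, ⟨fun t => ?_, ?_⟩⟩
  · rw [hceq]; exact hS1.1 t
  · simp only [hceq]; exact hS1.2
  · rw [hceq]; exact hS2.1 t
  · simp only [hceq]; exact hS2.2
  · rw [hceq]; exact hS3.1 t
  · simp only [hceq]; exact hS3.2
end
end
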